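/- arXiv:2009.08433 — 3 statements merged into one kernel-verified Lean document; each statement's English description precedes it below -/
import Mathlib

section
/- Let I = (i₋, i₊) ⊆ ℝ be an open interval and f : I → ℝ twice continuously differentiable with ‖f'‖_{C⁰(I)} < ∞ and ‖f''‖_{C⁰(I)} < ∞. Let I'₁, I'₂ ⊆ I be intervals with [|f|]_{I'₁} > 0 and [|f|]_{I'₂} > 0. Let a < b and let ū, ψ ∈ C¹([a,b]) with Im(ū) ⊊ I'₁ and Im(ψ) ⊊ I'₂ satisfy ‖ū'‖_{C⁰([a,b])} < [|f|]_{I'₁} / ((b−a)·‖f''‖_{C⁰(I)}) and ‖ψ'‖_{C⁰([a,b])} < [|f|]_{I'₂} / ((b−a)·‖f''‖_{C⁰(I)}). Then for every T > T* := (b−a)/[|f|]_{I'₁} + (b−a)/[|f|]_{I'₂} there exists h ∈ C⁰([0,T]) such that the balance law ∂ₜu + ∂ₓf(u) = h(t) admits a classical solution u ∈ C¹([0,T]×[a,b]) with u(0,x) = ū(x) and u(T,x) = ψ(x) for all x ∈ [a,b]. -/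
open Set Filter MeasureTheory Topology

/-- The sup (C⁰) norm of `φ` on the set `s`: `‖φ‖_{C⁰(s)} = sup_{x ∈ s} |φ x|`. -/
noncomputable def supNorm (φ : ℝ → ℝ) (s : Set ℝ) : ℝ :=
  sSup ((fun x => |φ x|) '' s)

/-- `[|f|]_{J}` relative to the domain `I`: the sup over all `k ≠ 0` with `J + k ⊆ I`
of `inf_{u ∈ J} |(f (u + k) - f u) / k|`. -/
noncomputable def bracketNorm (f : ℝ → ℝ) (I J : Set ℝ) : ℝ :=
  sSup {r : ℝ | ∃ k : ℝ, k ≠ 0 ∧ (fun u => u + k) '' J ⊆ I ∧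
    r = sInf ((fun u => |(f (u + k) - f u) / k|) '' J)}

/-- A classical solution of `∂ₜ u + ∂ₓ f(u) = h(t)` on `[0,T] × [a,b]`, taking values in `I`. -/
def IsClassicalSolution (I : Set ℝ) (f h : ℝ → ℝ) (T a b : ℝ) (u : ℝ → ℝ → ℝ) : Prop :=
  ContDiffOn ℝ 1 (fun p : ℝ × ℝ => u p.1 p.2) (Set.Icc 0 T ×ˢ Set.Icc a b) ∧
  (∀ t ∈ Set.Icc 0 T, ∀ x ∈ Set.Icc a b, u t x ∈ I) ∧
  (∀ t ∈ Set.Icc 0 T, ∀ x ∈ Set.Icc a b,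
    derivWithin (fun s => u s x) (Set.Icc 0 T) t
      + deriv f (u t x) * derivWithin (fun y => u t y) (Set.Icc a b) x = h t)

/-- A classical solution of `∂ₜ u + ∂ₓ f(u) = h(t)` on `[0,T] × ℝ`, taking values in `I`. -/
def IsClassicalSolutionLine (I : Set ℝ) (f h : ℝ → ℝ) (T : ℝ) (u : ℝ → ℝ → ℝ) : Prop :=
  ContDiffOn ℝ 1 (fun p : ℝ × ℝ => u p.1 p.2) (Set.Icc 0 T ×ˢ (Set.univ : Set ℝ)) ∧
  (∀ t ∈ Set.Icc 0 T, ∀ x : ℝ, u t x ∈ I) ∧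
  (∀ t ∈ Set.Icc 0 T, ∀ x : ℝ,
    derivWithin (fun s => u s x) (Set.Icc 0 T) t
      + deriv f (u t x) * deriv (fun y => u t y) x = h t)

/-- Hypothesis (H2)-(ii): `i₊ = +∞`, `|f'(u)| → ∞` as `u → +∞`, and
`|f'(u)| / sup_{z ∈ (i₋, u)} |f''(z)| → ∞` as `u → +∞`. -/
def H2ii (I : Set ℝ) (f : ℝ → ℝ) : Prop :=
  ¬ BddAbove I ∧ Filter.Tendsto (fun u => |deriv f u|) Filter.atTop Filter.atTop ∧
    Filter.Tendsto
      (fun u => |deriv f u| / sSup ((fun z => |deriv (deriv f) z|) '' {z ∈ I | z < u}))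
      Filter.atTop Filter.atTop

/-- Hypothesis (H2)-(iii): `i₋ = -∞`, `|f'(u)| → ∞` as `u → -∞`, and
`|f'(u)| / sup_{z ∈ (u, i₊)} |f''(z)| → ∞` as `u → -∞`. -/
def H2iii (I : Set ℝ) (f : ℝ → ℝ) : Prop :=
  ¬ BddBelow I ∧ Filter.Tendsto (fun u => |deriv f u|) Filter.atBot Filter.atTop ∧
    Filter.Tendsto
      (fun u => |deriv f u| / sSup ((fun z => |deriv (deriv f) z|) '' {z ∈ I | u < z}))
      Filter.atBot Filter.atTop

/-- The upper Dini derivative `D⁺φ(x)` of `φ` at `x`, with increments restricted to `s`. -/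
noncomputable def upperDini (φ : ℝ → ℝ) (s : Set ℝ) (x : ℝ) : EReal :=
  Filter.limsup (fun k => (((φ (x + k) - φ x) / k : ℝ) : EReal))
    (nhdsWithin 0 {k : ℝ | k ≠ 0 ∧ x + k ∈ s})

/-- The lower Dini derivative `D⁻φ(x)` of `φ` at `x`, with increments restricted to `s`. -/
noncomputable def lowerDini (φ : ℝ → ℝ) (s : Set ℝ) (x : ℝ) : EReal :=
  Filter.liminf (fun k => (((φ (x + k) - φ x) / k : ℝ) : EReal))
    (nhdsWithin 0 {k : ℝ | k ≠ 0 ∧ x + k ∈ s})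

/-- An entropy / entropy-flux pair `(η, q)` for the flux `f` on `I`. -/
def IsEntropyPair (I : Set ℝ) (f η q : ℝ → ℝ) : Prop :=
  ContDiffOn ℝ 1 η I ∧ ContDiffOn ℝ 1 q I ∧ ∀ v ∈ I, deriv q v = deriv η v * deriv f v

/-- An entropy weak solution of `∂ₜ u + ∂ₓ f(u) = h(t)`, `u(0,·) = ū`, on `[0,T] × [a,b]`. -/
def IsEntropyWeakSolution (I : Set ℝ) (f h : ℝ → ℝ) (T a b : ℝ)
    (ubar : ℝ → ℝ) (u : ℝ → ℝ → ℝ) : Prop :=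
  (∀ t ∈ Set.Icc 0 T, ∀ x ∈ Set.Icc a b, u t x ∈ I) ∧
  (∀ t₀ ∈ Set.Icc 0 T,
    Filter.Tendsto (fun t => ∫ x in Set.Icc a b, |u t x - u t₀ x|)
      (nhdsWithin t₀ (Set.Icc 0 T)) (nhds 0)) ∧
  (∀ᵐ x ∂(MeasureTheory.volume.restrict (Set.Icc a b)), u 0 x = ubar x) ∧
  (∀ η q : ℝ → ℝ, IsEntropyPair I f η q → ConvexOn ℝ I η →
    ∀ φ : ℝ × ℝ → ℝ, ContDiff ℝ 1 φ → HasCompactSupport φ →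
      tsupport φ ⊆ Set.Ioo 0 T ×ˢ Set.Ioo a b → (∀ p, 0 ≤ φ p) →
      0 ≤ ∫ t in Set.Ioo 0 T, ∫ x in Set.Ioo a b,
        (η (u t x) * deriv (fun s => φ (s, x)) t +
         q (u t x) * deriv (fun y => φ (t, y)) x +
         deriv η (u t x) * h t * φ (t, x)))


/-!
On a time interval where the source is a constant `σ`, a classical solution grows like `σ t`
along each characteristic, and the characteristic from `y` moves with speed `f' (w y + σ t)` (`w`
the initial state); with `σ = k / τ` it has moved by `τ Δf(w y; k)` at time `τ`. The definition
of `[|f|]_{I'₁}` provides `k` with `|Δf(·; k)| ≥ c > (b - a) / τ` on `I'₁`, where `Δf(·; k)` then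
has a constant sign, so at time `τ` every characteristic through `[a, b]` starts where a `C¹`
extension of `ū` is flat: the state is constant in space. Before, characteristics do not cross,
as the gradient bound makes `∂_y` of their position `≥ 1 - τ ‖ū'‖ ‖f''‖ > 0`, so the method of
characteristics gives a `C¹` solution. Treating `ψ` in the same way for the flux `-f` and reversing time, and joining the
two constant states by a `C¹` curve `c(t)` (a solution with source `c'`), fills `[0, T]`.
-/

open Function

section Piecewise

variable {α β : Type*} [TopologicalSpace α] {π : α → ℝ} {θ : ℝ} {F₁ F₂ : α → β} {O : Set α}
  {p : α}

theorem ite_eventuallyEq_left (hO : IsOpen O) (hp : p ∈ O)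
    (h : ∀ q ∈ O, θ < π q → F₂ q = F₁ q) :
    (fun q => if π q ≤ θ then F₁ q else F₂ q) =ᶠ[𝓝 p] F₁ := by
  filter_upwards [hO.mem_nhds hp] with q hq
  split_ifs with hθ
  · rfl
  · exact h q hq (not_le.1 hθ)

theorem ite_eventuallyEq_right (hO : IsOpen O) (hp : p ∈ O)
    (h : ∀ q ∈ O, π q ≤ θ → F₁ q = F₂ q) :
    (fun q => if π q ≤ θ then F₁ q else F₂ q) =ᶠ[𝓝 p] F₂ := by
  filter_upwards [hO.mem_nhds hp] with q hq
  split_ifs with hθ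
  · exact h q hq hθ
  · rfl

end Piecewise

theorem ContinuousLinearMap.isInvertible_of_apply_one_ne_zero {L : ℝ →L[ℝ] ℝ} (hL : L 1 ≠ 0) :
    L.IsInvertible := by
  refine .of_inverse (g := (L 1)⁻¹ • ContinuousLinearMap.id ℝ ℝ) ?_ ?_ <;> ext <;> simp [hL]

theorem contDiffAt_of_unique_zero {E : Type*} [NormedAddCommGroup E] [NormedSpace ℝ E]
    [CompleteSpace E] {G : E × ℝ → ℝ} {Y : E → ℝ} {p : E} {d : ℝ}
    (hG : ContDiffAt ℝ 1 G (p, Y p)) (hGp : G (p, Y p) = 0)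
    (hd : HasDerivAt (fun y => G (p, y)) d (Y p)) (hd0 : d ≠ 0)
    (huniq : ∀ᶠ q in 𝓝 p, ∀ y, G (q, y) = 0 → Y q = y) : ContDiffAt ℝ 1 Y p := by
  have hd' : fderiv ℝ G (p, Y p) ∘L .inr ℝ E ℝ = d • ContinuousLinearMap.id ℝ ℝ := by
    have := ((hG.differentiableAt one_ne_zero).hasFDerivAt.comp (Y p)
      ((hasFDerivAt_const p (Y p)).prodMk (hasFDerivAt_id (Y p)))).hasDerivAt.unique hd
    ext
    simpa using this
  have hinv : (fderiv ℝ G (p, Y p) ∘L .inr ℝ E ℝ).IsInvertible :=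
    ContinuousLinearMap.isInvertible_of_apply_one_ne_zero (by simpa [hd'] using hd0)
  refine (hG.contDiffAt_implicitFunction one_ne_zero hinv).congr_of_eventuallyEq ?_
  filter_upwards [huniq, hG.eventually_apply_implicitFunction one_ne_zero hinv] with q hq hψ
  exact hq _ (hψ.trans hGp)

theorem abs_deriv_sub_deriv_le {I : Set ℝ} {f : ℝ → ℝ} {M z₁ z₂ : ℝ} (hI : IsOpen I)
    (hIc : Convex ℝ I) (hf : ContDiffOn ℝ 2 f I) (hM : ∀ z ∈ I, |deriv (deriv f) z| ≤ M)
    (h₁ : z₁ ∈ I) (h₂ : z₂ ∈ I) : |deriv f z₂ - deriv f z₁| ≤ M * |z₂ - z₁| := by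
  have hf' : ContDiffOn ℝ 1 (deriv f) I := hf.deriv_of_isOpen hI (by norm_num)
  simpa only [Real.norm_eq_abs] using hIc.norm_image_sub_le_of_norm_deriv_le
    (fun z hz => (hf'.contDiffAt (hI.mem_nhds hz)).differentiableAt one_ne_zero) hM h₁ h₂

theorem surjective_of_le_deriv {g : ℝ → ℝ} {C : ℝ} (hg : Differentiable ℝ g) (hC : 0 < C)
    (h : ∀ y, C ≤ deriv g y) : Surjective g := by
  refine hg.continuous.surjective ?_ ?_
  · refine tendsto_atTop_mono' _ ?_ (tendsto_atTop_add_const_left _ (g 0)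
      (tendsto_id.const_mul_atTop hC))
    filter_upwards [eventually_ge_atTop 0] with y hy
    simp only [id]
    linarith [mul_sub_le_image_sub_of_le_deriv hg h hy]
  · refine tendsto_atBot_mono' _ ?_ (tendsto_atBot_add_const_left _ (g 0)
      (tendsto_id.const_mul_atBot hC))
    filter_upwards [eventually_le_atBot 0] with y hy
    simp only [id]
    linarith [mul_sub_le_image_sub_of_le_deriv hg h hy]

theorem IsPreconnected.forall_le_or_forall_le_neg {J : Set ℝ} {g : ℝ → ℝ} {c : ℝ}
    (hJ : IsPreconnected J) (hg : ContinuousOn g J) (hc : 0 < c) (h : ∀ v ∈ J, c ≤ |g v|) :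
    (∀ v ∈ J, c ≤ g v) ∨ (∀ v ∈ J, g v ≤ -c) := by
  by_contra! hne
  obtain ⟨⟨v₁, hv₁, h₁⟩, ⟨v₂, hv₂, h₂⟩⟩ := hne
  have h₁' : g v₁ ≤ -c := by cases abs_cases (g v₁) <;> linarith [h v₁ hv₁]
  have h₂' : c ≤ g v₂ := by cases abs_cases (g v₂) <;> linarith [h v₂ hv₂]
  obtain ⟨v, hv, hv0⟩ := hJ.intermediate_value hv₁ hv₂ hg
    (show (0 : ℝ) ∈ Icc (g v₁) (g v₂) from ⟨by linarith, by linarith⟩)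
  have := h v hv
  rw [hv0, abs_zero] at this
  linarith

theorem exists_abs_sub_le_of_flat {W φ : ℝ → ℝ} {a b D δ : ℝ} (hab : a ≤ b) (hδ : 0 ≤ δ)
    (hW : Differentiable ℝ W) (hD : ∀ y, |deriv W y| ≤ D) (hWφ : EqOn W φ (Icc a b))
    (hl : ∀ y ≤ a - δ, W y = φ a) (hr : ∀ y ≥ b + δ, W y = φ b) (y : ℝ) :
    ∃ z ∈ Icc a b, |W y - φ z| ≤ δ * D := by
  have hlip : ∀ y₁ y₂, |W y₁ - W y₂| ≤ D * |y₁ - y₂| := fun y₁ y₂ => by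
    simpa only [Real.norm_eq_abs] using convex_univ.norm_image_sub_le_of_norm_deriv_le
      (fun z _ => hW z) (fun z _ => hD z) (mem_univ y₂) (mem_univ y₁)
  have hD0 : 0 ≤ D := (abs_nonneg _).trans (hD 0)
  have ha : a ∈ Icc a b := ⟨le_rfl, hab⟩
  have hb : b ∈ Icc a b := ⟨hab, le_rfl⟩
  rcases le_or_gt y a with hya | hya
  · refine ⟨a, ha, ?_⟩
    rcases le_or_gt y (a - δ) with hy | hy
    · simp [hl y hy, mul_nonneg hδ hD0]
    · calc |W y - φ a| ≤ D * |y - a| := hWφ ha ▸ hlip y a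
        _ ≤ D * δ := by gcongr; rw [abs_le]; constructor <;> linarith
        _ = δ * D := mul_comm _ _
  rcases le_or_gt y b with hyb | hyb
  · exact ⟨y, ⟨hya.le, hyb⟩, by simp [hWφ ⟨hya.le, hyb⟩, mul_nonneg hδ hD0]⟩
  refine ⟨b, hb, ?_⟩
  rcases le_or_gt (b + δ) y with hy | hy
  · simp [hr y hy, mul_nonneg hδ hD0]
  · calc |W y - φ b| ≤ D * |y - b| := hWφ hb ▸ hlip y b
      _ ≤ D * δ := by gcongr; rw [abs_le]; constructor <;> linarith
      _ = δ * D := mul_comm _ _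

/-- Pointwise form of `IsClassicalSolution` with two-sided derivatives: it only depends on the germ
of `u` at `p`, so solutions can be glued along open sets. -/
def IsClassicalSolutionAt (I : Set ℝ) (f h : ℝ → ℝ) (u : ℝ → ℝ → ℝ) (p : ℝ × ℝ) : Prop :=
  ContDiffAt ℝ 1 (uncurry u) p ∧ u p.1 p.2 ∈ I ∧
    deriv (fun s => u s p.2) p.1 + deriv f (u p.1 p.2) * deriv (u p.1) p.2 = h p.1

def IsClassicalSolutionOn (I : Set ℝ) (f h : ℝ → ℝ) (u : ℝ → ℝ → ℝ) (S : Set (ℝ × ℝ)) :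
    Prop :=
  ∀ p ∈ S, IsClassicalSolutionAt I f h u p

namespace IsClassicalSolutionAt

variable {I : Set ℝ} {f h₁ h : ℝ → ℝ} {u₁ u : ℝ → ℝ → ℝ} {p : ℝ × ℝ}

theorem differentiableAt_time (hu : IsClassicalSolutionAt I f h u p) :
    DifferentiableAt ℝ (fun s => u s p.2) p.1 :=
  (hu.1.differentiableAt one_ne_zero).comp (x := p.1) (f := fun s => (s, p.2))
    (differentiableAt_id.prodMk (differentiableAt_const _))

theorem differentiableAt_space (hu : IsClassicalSolutionAt I f h u p) :
    DifferentiableAt ℝ (u p.1) p.2 :=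
  (hu.1.differentiableAt one_ne_zero).comp (x := p.2) (f := fun y => (p.1, y))
    ((differentiableAt_const _).prodMk differentiableAt_id)

theorem congr (hu : IsClassicalSolutionAt I f h₁ u₁ p) (heq : uncurry u₁ =ᶠ[𝓝 p] uncurry u)
    (hh : h₁ p.1 = h p.1) : IsClassicalSolutionAt I f h u p := by
  obtain ⟨hC, hI, hPDE⟩ := hu
  have ht : (fun s => u₁ s p.2) =ᶠ[𝓝 p.1] fun s => u s p.2 :=
    (continuous_id.prodMk continuous_const).continuousAt.eventually heq
  have hx : u₁ p.1 =ᶠ[𝓝 p.2] u p.1 :=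
    (continuous_const.prodMk continuous_id).continuousAt.eventually heq
  have hp : u₁ p.1 p.2 = u p.1 p.2 := heq.eq_of_nhds
  exact ⟨hC.congr_of_eventuallyEq heq.symm, hp ▸ hI,
    by rw [← ht.deriv_eq, ← hx.deriv_eq, ← hp, hPDE, hh]⟩

theorem comp_sub_left {T : ℝ} (hu : IsClassicalSolutionAt I (fun v => -f v) h u (T - p.1, p.2)) :
    IsClassicalSolutionAt I f (fun t => -h (T - t)) (fun t x => u (T - t) x) p := by
  obtain ⟨hC, hI, hPDE⟩ := hu
  refine ⟨hC.comp p ((contDiffAt_const.sub contDiffAt_fst).prodMk contDiffAt_snd), hI, ?_⟩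
  have hf : deriv (fun v => -f v) = fun v => -deriv f v := funext fun v => deriv.fun_neg
  simp only [hf] at hPDE
  simp only [deriv_comp_const_sub (fun s => u s p.2), ← hPDE]
  ring

end IsClassicalSolutionAt

theorem isClassicalSolutionAt_const {I : Set ℝ} {f c : ℝ → ℝ} {p : ℝ × ℝ}
    (hc : ContDiffAt ℝ 1 c p.1) (hcI : c p.1 ∈ I) :
    IsClassicalSolutionAt I f (deriv c) (fun t _ => c t) p :=
  ⟨hc.comp p contDiffAt_fst, hcI, by simp⟩

theorem isClassicalSolution_of_isClassicalSolutionOn {I : Set ℝ} {f h : ℝ → ℝ} {T a b : ℝ}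
    {u : ℝ → ℝ → ℝ} (hT : 0 < T) (hab : a < b)
    (hu : IsClassicalSolutionOn I f h u (Icc 0 T ×ˢ Icc a b)) :
    IsClassicalSolution I f h T a b u := by
  refine ⟨fun p hp => (hu p hp).1.contDiffWithinAt, fun t ht x hx => (hu (t, x) ⟨ht, hx⟩).2.1,
    fun t ht x hx => ?_⟩
  have hs := hu (t, x) ⟨ht, hx⟩
  rw [hs.differentiableAt_time.derivWithin (uniqueDiffOn_Icc hT t ht),
    hs.differentiableAt_space.derivWithin (uniqueDiffOn_Icc hab x hx)]
  exact hs.2.2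

theorem IsClassicalSolutionOn.mono {I : Set ℝ} {f h : ℝ → ℝ} {u : ℝ → ℝ → ℝ}
    {S S' : Set (ℝ × ℝ)} (hu : IsClassicalSolutionOn I f h u S) (hS : S' ⊆ S) :
    IsClassicalSolutionOn I f h u S' :=
  fun p hp => hu p (hS hp)

theorem IsClassicalSolutionOn.comp_sub_left {I X : Set ℝ} {f h : ℝ → ℝ} {u : ℝ → ℝ → ℝ}
    {t₀ t₁ T : ℝ} (hu : IsClassicalSolutionOn I (fun v => -f v) h u (Ioo t₀ t₁ ×ˢ X)) :
    IsClassicalSolutionOn I f (fun t => -h (T - t)) (fun t x => u (T - t) x)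
      (Ioo (T - t₁) (T - t₀) ×ˢ X) :=
  fun p hp => (hu (T - p.1, p.2) ⟨⟨by linarith [hp.1.2], by linarith [hp.1.1]⟩, hp.2⟩).comp_sub_left

theorem IsClassicalSolutionOn.ite {I X : Set ℝ} {f h : ℝ → ℝ} {u₁ u₂ : ℝ → ℝ → ℝ}
    {t₀ t₁ t₂ t₃ θ : ℝ} (hX : IsOpen X) (hu₁ : IsClassicalSolutionOn I f h u₁ (Ioo t₀ t₁ ×ˢ X))
    (hu₂ : IsClassicalSolutionOn I f h u₂ (Ioo t₂ t₃ ×ˢ X)) (hθ₂ : t₂ ≤ θ) (hθ₁ : θ < t₁)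
    (hu : ∀ t ∈ Ioo t₂ t₁, ∀ x ∈ X, u₁ t x = u₂ t x) :
    IsClassicalSolutionOn I f h (fun t x => if t ≤ θ then u₁ t x else u₂ t x)
      (Ioo t₀ t₃ ×ˢ X) := by
  rintro ⟨t, x⟩ ⟨ht, hx⟩
  rcases le_or_gt t θ with htθ | htθ
  · have hp : (t, x) ∈ Ioo t₀ t₁ ×ˢ X := ⟨⟨ht.1, htθ.trans_lt hθ₁⟩, hx⟩
    refine (hu₁ _ hp).congr (ite_eventuallyEq_left (isOpen_Ioo.prod hX) hp ?_).symm rfl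
    exact fun q hq hqθ => (hu q.1 ⟨hθ₂.trans_lt hqθ, hq.1.2⟩ q.2 hq.2).symm
  · have hp : (t, x) ∈ Ioo t₂ t₃ ×ˢ X := ⟨⟨hθ₂.trans_lt htθ, ht.2⟩, hx⟩
    refine (hu₂ _ hp).congr (ite_eventuallyEq_right (isOpen_Ioo.prod hX) hp ?_).symm rfl
    exact fun q hq hqθ => hu q.1 ⟨hq.1.1, hqθ.trans_lt hθ₁⟩ q.2 hq.2

section Characteristics

variable {I B : Set ℝ} {f w : ℝ → ℝ} {σ M θ : ℝ}

/-- Along the characteristic issued from `y` the solution is `w y + σ t`; integrating its speed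
`f' (w y + σ t)` gives its position at time `t`. -/
noncomputable def charCurve (f w : ℝ → ℝ) (σ t y : ℝ) : ℝ :=
  y + (f (w y + σ * t) - f (w y)) / σ

noncomputable def charCurveDeriv (f w : ℝ → ℝ) (σ t y : ℝ) : ℝ :=
  1 + (deriv f (w y + σ * t) - deriv f (w y)) * deriv w y / σ

noncomputable def charFoot (f w : ℝ → ℝ) (σ t x : ℝ) : ℝ :=
  invFun (charCurve f w σ t) x

noncomputable def charSolution (f w : ℝ → ℝ) (σ t x : ℝ) : ℝ :=
  w (charFoot f w σ t x) + σ * t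

theorem charSolution_zero (x : ℝ) : charSolution f w σ 0 x = w x := by
  have h : charCurve f w σ 0 = id := funext fun y => by simp [charCurve]
  simp only [charSolution, charFoot, h, mul_zero, add_zero]
  exact congrArg w (invFun_eq (f := id) ⟨x, rfl⟩)

theorem charCurve_div_mul {k τ : ℝ} (hτ : τ ≠ 0) (y : ℝ) :
    charCurve f w (k / τ) τ y = y + τ * ((f (w y + k) - f (w y)) / k) := by
  rw [charCurve, div_mul_cancel₀ k hτ, div_div_eq_mul_div]
  ring

theorem hasDerivAt_charCurve_comp {τ y : ℝ → ℝ} {τ' y' s : ℝ} (hτ : HasDerivAt τ τ' s)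
    (hy : HasDerivAt y y' s) (hw : DifferentiableAt ℝ w (y s))
    (hf₀ : DifferentiableAt ℝ f (w (y s))) (hf₁ : DifferentiableAt ℝ f (w (y s) + σ * τ s))
    (hσ : σ ≠ 0) :
    HasDerivAt (fun s => charCurve f w σ (τ s) (y s))
      (charCurveDeriv f w σ (τ s) (y s) * y' + deriv f (w (y s) + σ * τ s) * τ') s := by
  have hwy := hw.hasDerivAt.comp s hy
  have h₁ := hf₁.hasDerivAt.comp s (hwy.add (hτ.const_mul σ))
  have h₀ := hf₀.hasDerivAt.comp s hwy
  refine (hy.add ((h₁.sub h₀).div_const σ)).congr_deriv ?_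
  simp only [charCurveDeriv]
  field_simp
  ring

structure NoncrossingCharacteristics (I : Set ℝ) (f w : ℝ → ℝ) (σ M θ : ℝ) (B : Set ℝ) :
    Prop where
  isOpen : IsOpen I
  convex : Convex ℝ I
  contDiffOn : ContDiffOn ℝ 2 f I
  abs_deriv_deriv_le : ∀ z ∈ I, |deriv (deriv f) z| ≤ M
  contDiff : ContDiff ℝ 1 w
  ne_zero : σ ≠ 0
  isOpen_times : IsOpen B
  zero_mem : (0 : ℝ) ∈ B
  mem : ∀ t ∈ B, ∀ y, w y + σ * t ∈ I
  lt_one : θ < 1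
  le : ∀ t ∈ B, ∀ y, M * |t| * |deriv w y| ≤ θ

namespace NoncrossingCharacteristics

variable {t x y α : ℝ}

theorem mem_zero (hc : NoncrossingCharacteristics I f w σ M θ B) (y : ℝ) : w y ∈ I := by
  simpa using hc.mem 0 hc.zero_mem y

theorem differentiableAt (hc : NoncrossingCharacteristics I f w σ M θ B) {z : ℝ} (hz : z ∈ I) :
    DifferentiableAt ℝ f z :=
  (hc.contDiffOn.contDiffAt (hc.isOpen.mem_nhds hz)).differentiableAt (by norm_num)

theorem hasDerivAt_charCurve (hc : NoncrossingCharacteristics I f w σ M θ B) (ht : t ∈ B) :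
    HasDerivAt (charCurve f w σ t) (charCurveDeriv f w σ t y) y := by
  simpa using hasDerivAt_charCurve_comp (hasDerivAt_const y t) (hasDerivAt_id y)
    (hc.contDiff.differentiable one_ne_zero y) (hc.differentiableAt (hc.mem_zero y))
    (hc.differentiableAt (hc.mem t ht y)) hc.ne_zero

theorem one_sub_le_charCurveDeriv (hc : NoncrossingCharacteristics I f w σ M θ B) (ht : t ∈ B) :
    1 - θ ≤ charCurveDeriv f w σ t y := by
  have hlip := abs_deriv_sub_deriv_le hc.isOpen hc.convex hc.contDiffOn hc.abs_deriv_deriv_le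
    (hc.mem_zero y) (hc.mem t ht y)
  have hσ : 0 < |σ| := abs_pos.2 hc.ne_zero
  have : |(deriv f (w y + σ * t) - deriv f (w y)) * deriv w y / σ| ≤ θ := by
    rw [abs_div, abs_mul, div_le_iff₀ hσ]
    calc |deriv f (w y + σ * t) - deriv f (w y)| * |deriv w y|
        ≤ M * |σ * t| * |deriv w y| := by gcongr; simpa using hlip
      _ = M * |t| * |deriv w y| * |σ| := by rw [abs_mul]; ring
      _ ≤ θ * |σ| := by gcongr; exact hc.le t ht y
  simp only [charCurveDeriv]
  linarith [neg_abs_le ((deriv f (w y + σ * t) - deriv f (w y)) * deriv w y / σ)]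

theorem strictMono (hc : NoncrossingCharacteristics I f w σ M θ B) (ht : t ∈ B) :
    StrictMono (charCurve f w σ t) :=
  strictMono_of_deriv_pos fun _ => (hc.hasDerivAt_charCurve ht).deriv ▸
    (sub_pos.2 hc.lt_one).trans_le (hc.one_sub_le_charCurveDeriv ht)

theorem surjective (hc : NoncrossingCharacteristics I f w σ M θ B) (ht : t ∈ B) :
    Surjective (charCurve f w σ t) :=
  surjective_of_le_deriv (fun _ => (hc.hasDerivAt_charCurve ht).differentiableAt)
    (sub_pos.2 hc.lt_one) fun _ => (hc.hasDerivAt_charCurve ht).deriv ▸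
      hc.one_sub_le_charCurveDeriv ht

theorem charCurve_charFoot (hc : NoncrossingCharacteristics I f w σ M θ B) (ht : t ∈ B)
    (x : ℝ) : charCurve f w σ t (charFoot f w σ t x) = x :=
  invFun_eq (hc.surjective ht x)

theorem charFoot_eq (hc : NoncrossingCharacteristics I f w σ M θ B) (ht : t ∈ B)
    (h : charCurve f w σ t y = x) : charFoot f w σ t x = y :=
  (hc.strictMono ht).injective ((hc.charCurve_charFoot ht x).trans h.symm)

theorem charSolution_eq_of_le (hc : NoncrossingCharacteristics I f w σ M θ B) (ht : t ∈ B)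
    (hflat : ∀ y ≤ α, w y = w α) (hx : x ≤ charCurve f w σ t α) :
    charSolution f w σ t x = w α + σ * t := by
  refine congrArg (· + σ * t) (hflat _ ?_)
  rw [← (hc.strictMono ht).le_iff_le, hc.charCurve_charFoot ht]
  exact hx

theorem charSolution_eq_of_ge (hc : NoncrossingCharacteristics I f w σ M θ B) (ht : t ∈ B)
    (hflat : ∀ y ≥ α, w y = w α) (hx : charCurve f w σ t α ≤ x) :
    charSolution f w σ t x = w α + σ * t := by
  refine congrArg (· + σ * t) (hflat _ ?_)
  rw [ge_iff_le, ← (hc.strictMono ht).le_iff_le, hc.charCurve_charFoot ht]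
  exact hx

theorem contDiffAt_charFoot (hc : NoncrossingCharacteristics I f w σ M θ B) {p : ℝ × ℝ}
    (hp : p.1 ∈ B) : ContDiffAt ℝ 1 (uncurry (charFoot f w σ)) p := by
  set y := charFoot f w σ p.1 p.2
  have hf : ∀ z ∈ I, ContDiffAt ℝ 1 f z := fun z hz =>
    (hc.contDiffOn.contDiffAt (hc.isOpen.mem_nhds hz)).of_le one_le_two
  have hw : ContDiff ℝ 1 w := hc.contDiff
  refine contDiffAt_of_unique_zero (G := fun q => charCurve f w σ q.1.1 q.2 - q.1.2)
    (p := p) (d := charCurveDeriv f w σ p.1 y) ?_ ?_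
    ((hc.hasDerivAt_charCurve hp).sub_const p.2) ?_ ?_
  · have h₁ : ContDiffAt ℝ 1 (fun q : (ℝ × ℝ) × ℝ => f (w q.2 + σ * q.1.1)) (p, y) :=
      (hf _ (hc.mem _ hp y)).comp (p, y) (by fun_prop)
    have h₀ : ContDiffAt ℝ 1 (fun q : (ℝ × ℝ) × ℝ => f (w q.2)) (p, y) :=
      (hf _ (hc.mem_zero y)).comp (p, y) (by fun_prop)
    exact (contDiffAt_snd.add ((h₁.sub h₀).div_const σ)).sub (by fun_prop)
  · exact sub_eq_zero.2 (hc.charCurve_charFoot hp p.2)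
  · exact ((sub_pos.2 hc.lt_one).trans_le (hc.one_sub_le_charCurveDeriv hp)).ne'
  · filter_upwards [continuous_fst.continuousAt.preimage_mem_nhds
      (hc.isOpen_times.mem_nhds hp)] with q hq y' hy'
    exact hc.charFoot_eq hq (sub_eq_zero.1 hy')

theorem isClassicalSolutionAt (hc : NoncrossingCharacteristics I f w σ M θ B) {p : ℝ × ℝ}
    (hp : p.1 ∈ B) : IsClassicalSolutionAt I f (fun _ => σ) (charSolution f w σ) p := by
  obtain ⟨t, x⟩ := p
  set y := charFoot f w σ t x
  have hY := (hc.contDiffAt_charFoot hp).differentiableAt one_ne_zero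
  have hYt : HasDerivAt (fun s => charFoot f w σ s x) (deriv (fun s => charFoot f w σ s x) t) t :=
    (hY.comp (x := t) (f := fun s => (s, x))
      (differentiableAt_id.prodMk (differentiableAt_const _))).hasDerivAt
  have hYx : HasDerivAt (charFoot f w σ t) (deriv (charFoot f w σ t) x) x :=
    (hY.comp (x := x) (f := fun x' => (t, x'))
      ((differentiableAt_const _).prodMk differentiableAt_id)).hasDerivAt
  have hw := hc.contDiff.differentiable one_ne_zero y
  have hf₀ := hc.differentiableAt (hc.mem_zero y)
  have hf₁ := hc.differentiableAt (hc.mem t hp y)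
  -- differentiate `charCurve s (charFoot s x') = x'` in `s` and in `x'`
  have htime := (hasDerivAt_charCurve_comp (hasDerivAt_id t) hYt hw hf₀ hf₁ hc.ne_zero).unique
    ((hasDerivAt_const t x).congr_of_eventuallyEq (by
      filter_upwards [hc.isOpen_times.mem_nhds hp] with s hs using hc.charCurve_charFoot hs x))
  have hspace := (hasDerivAt_charCurve_comp (hasDerivAt_const x t) hYx hw hf₀ hf₁
    hc.ne_zero).unique ((hasDerivAt_id x).congr_of_eventuallyEq
      (Eventually.of_forall fun x' => hc.charCurve_charFoot hp x'))
  have hJ : charCurveDeriv f w σ t y ≠ 0 :=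
    ((sub_pos.2 hc.lt_one).trans_le (hc.one_sub_le_charCurveDeriv hp)).ne'
  have key : deriv (fun s => charFoot f w σ s x) t
      + deriv f (w y + σ * t) * deriv (charFoot f w σ t) x = 0 := by
    refine (mul_eq_zero.1 ?_).resolve_left hJ
    simp only [id] at htime hspace
    linear_combination htime + deriv f (w y + σ * t) * hspace
  refine ⟨((hc.contDiff.contDiffAt).comp _ (hc.contDiffAt_charFoot hp)).add
    (contDiffAt_const.mul contDiffAt_fst), hc.mem t hp y, ?_⟩
  have hut : HasDerivAt (fun s => charSolution f w σ s x)
      (deriv w y * deriv (fun s => charFoot f w σ s x) t + σ * 1) t :=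
    (hw.hasDerivAt.comp t hYt).add ((hasDerivAt_id t).const_mul σ)
  have hux : HasDerivAt (charSolution f w σ t) (deriv w y * deriv (charFoot f w σ t) x) x :=
    (hw.hasDerivAt.comp x hYx).add_const (σ * t)
  rw [hut.deriv, hux.deriv, show charSolution f w σ t x = w y + σ * t from rfl]
  linear_combination deriv w y * key

theorem continuousAt_charCurve (hc : NoncrossingCharacteristics I f w σ M θ B) (ht : t ∈ B)
    (y : ℝ) : ContinuousAt (fun s => charCurve f w σ s y) t := by
  have := (hc.differentiableAt (hc.mem t ht y)).continuousAt
  unfold charCurve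
  fun_prop

theorem eventually_charSolution_eq_of_lt (hc : NoncrossingCharacteristics I f w σ M θ B)
    (ht : t ∈ B) (hflat : ∀ y ≤ α, w y = w α) {ξ : ℝ} (hξ : ξ < charCurve f w σ t α) :
    ∀ᶠ s in 𝓝 t, ∀ x ≤ ξ, charSolution f w σ s x = w α + σ * s := by
  filter_upwards [hc.isOpen_times.mem_nhds ht,
    (hc.continuousAt_charCurve ht α).eventually (lt_mem_nhds hξ)] with s hs hsξ x hx
  exact hc.charSolution_eq_of_le hs hflat (hx.trans hsξ.le)

theorem eventually_charSolution_eq_of_gt (hc : NoncrossingCharacteristics I f w σ M θ B)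
    (ht : t ∈ B) (hflat : ∀ y ≥ α, w y = w α) {ξ : ℝ} (hξ : charCurve f w σ t α < ξ) :
    ∀ᶠ s in 𝓝 t, ∀ x ≥ ξ, charSolution f w σ s x = w α + σ * s := by
  filter_upwards [hc.isOpen_times.mem_nhds ht,
    (hc.continuousAt_charCurve ht α).eventually (gt_mem_nhds hξ)] with s hs hsξ x hx
  exact hc.charSolution_eq_of_ge hs hflat (hsξ.le.trans hx)

theorem exists_eventually_charSolution_eq (hc : NoncrossingCharacteristics I f w σ M θ B)
    {τ β : ℝ} (hτ : τ ∈ B) (hl : ∀ y ≤ α, w y = w α) (hr : ∀ y ≥ β, w y = w β)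
    (hcross : β < charCurve f w σ τ α ∨ charCurve f w σ τ β < α) :
    ∃ A ∈ I, ∀ᶠ t in 𝓝 τ, ∀ x ∈ Icc α β, charSolution f w σ t x = A + σ * (t - τ) := by
  rcases hcross with h | h
  · refine ⟨w α + σ * τ, hc.mem τ hτ α, ?_⟩
    filter_upwards [hc.eventually_charSolution_eq_of_lt hτ hl h] with t ht x hx
    rw [ht x hx.2]
    ring
  · refine ⟨w β + σ * τ, hc.mem τ hτ β, ?_⟩
    filter_upwards [hc.eventually_charSolution_eq_of_gt hτ hr h] with t ht x hx
    rw [ht x hx.1]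
    ring

end NoncrossingCharacteristics

end Characteristics

/-- Its mean over `[-1, 0]` vanishes, so that integrating `φ'` damped by this cutoff outside
`[a, b]` gives a `C¹` extension of `φ` that is flat, with values `φ a` and `φ b`, far out. -/
noncomputable def zeroMeanCutoff (s : ℝ) : ℝ :=
  (1 + max (-1) (min 0 s)) * (1 + 3 * max (-1) (min 0 s))

theorem continuous_zeroMeanCutoff : Continuous zeroMeanCutoff := by
  unfold zeroMeanCutoff; fun_prop

theorem zeroMeanCutoff_of_nonneg {s : ℝ} (hs : 0 ≤ s) : zeroMeanCutoff s = 1 := by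
  simp [zeroMeanCutoff, hs]

theorem zeroMeanCutoff_of_le {s : ℝ} (hs : s ≤ -1) : zeroMeanCutoff s = 0 := by
  simp [zeroMeanCutoff, min_eq_right (hs.trans (by norm_num : (-1 : ℝ) ≤ 0)), hs]

theorem abs_zeroMeanCutoff_le (s : ℝ) : |zeroMeanCutoff s| ≤ 1 := by
  have h₁ : -1 ≤ max (-1) (min 0 s) := le_max_left _ _
  have h₂ : max (-1) (min 0 s) ≤ 0 := max_le (by norm_num) (min_le_left _ _)
  rw [zeroMeanCutoff, abs_le]
  constructor <;> nlinarith

theorem integral_zeroMeanCutoff : ∫ s in (-1)..0, zeroMeanCutoff s = 0 := by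
  have hEq : EqOn zeroMeanCutoff (fun s => (1 + s) * (1 + 3 * s)) (uIcc (-1) 0) := by
    intro s hs
    rw [uIcc_of_le (by norm_num)] at hs
    simp [zeroMeanCutoff, hs.1, hs.2]
  rw [intervalIntegral.integral_congr hEq]
  have hderiv : ∀ s ∈ uIcc (-1 : ℝ) 0,
      HasDerivAt (fun s : ℝ => s + 2 * s ^ 2 + s ^ 3) ((1 + s) * (1 + 3 * s)) s := fun s _ => by
    have := ((hasDerivAt_id s).add ((hasDerivAt_pow 2 s).const_mul 2)).add (hasDerivAt_pow 3 s)
    exact this.congr_deriv (by simp; ring)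
  rw [intervalIntegral.integral_eq_sub_of_hasDerivAt hderiv
    ((by fun_prop : Continuous fun s : ℝ => (1 + s) * (1 + 3 * s)).intervalIntegrable _ _)]
  norm_num

theorem integral_zeroMeanCutoff_of_le {r : ℝ} (hr : r ≤ -1) :
    ∫ s in (0 : ℝ)..r, zeroMeanCutoff s = 0 := by
  have hzero : ∫ s in (-1 : ℝ)..r, zeroMeanCutoff s = 0 := by
    refine (intervalIntegral.integral_congr (g := fun _ => (0 : ℝ)) fun s hs => ?_).trans
      (by simp)
    rw [uIcc_of_ge hr] at hs
    exact zeroMeanCutoff_of_le hs.2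
  rw [← intervalIntegral.integral_add_adjacent_intervals (b := -1)
    (continuous_zeroMeanCutoff.intervalIntegrable _ _)
    (continuous_zeroMeanCutoff.intervalIntegrable _ _), intervalIntegral.integral_symm,
    integral_zeroMeanCutoff, hzero]
  simp

theorem integral_zeroMeanCutoff_div_sub {a δ y : ℝ} (hδ : 0 < δ) (hy : y ≤ a - δ) :
    ∫ s in a..y, zeroMeanCutoff (s / δ - a / δ) = 0 := by
  rw [intervalIntegral.integral_comp_div_sub (f := zeroMeanCutoff) hδ.ne', sub_self,
    integral_zeroMeanCutoff_of_le (by rw [← sub_div, div_le_iff₀ hδ]; linarith), smul_zero]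

theorem integral_zeroMeanCutoff_sub_div {b δ y : ℝ} (hδ : 0 < δ) (hy : b + δ ≤ y) :
    ∫ s in b..y, zeroMeanCutoff (b / δ - s / δ) = 0 := by
  rw [intervalIntegral.integral_comp_sub_div (f := zeroMeanCutoff) hδ.ne', sub_self,
    intervalIntegral.integral_symm,
    integral_zeroMeanCutoff_of_le (by rw [← sub_div, div_le_iff₀ hδ]; linarith), neg_zero,
    smul_zero]

theorem exists_contDiff_extension {φ : ℝ → ℝ} {a b D δ : ℝ} (hab : a < b)
    (hφ : ContDiffOn ℝ 1 φ (Icc a b)) (hD : ∀ x ∈ Icc a b, |derivWithin φ (Icc a b) x| ≤ D)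
    (hδ : 0 < δ) :
    ∃ W : ℝ → ℝ, ContDiff ℝ 1 W ∧ EqOn W φ (Icc a b) ∧ (∀ y, |deriv W y| ≤ D) ∧
      (∀ y ≤ a - δ, W y = φ a) ∧ (∀ y ≥ b + δ, W y = φ b) := by
  set φ' := derivWithin φ (Icc a b)
  have hclamp : ∀ s, max a (min b s) ∈ Icc a b := fun s =>
    ⟨le_max_left _ _, max_le hab.le (min_le_left _ _)⟩
  set g : ℝ → ℝ := fun s => φ' (max a (min b s)) * zeroMeanCutoff (min (s - a) (b - s) / δ)
  have hg : Continuous g :=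
    ((hφ.continuousOn_derivWithin (uniqueDiffOn_Icc hab) le_rfl).comp_continuous (by fun_prop)
      hclamp).mul (continuous_zeroMeanCutoff.comp (by fun_prop))
  have hgD : ∀ s, |g s| ≤ D := fun s => by
    rw [abs_mul, ← mul_one D]
    exact mul_le_mul (hD _ (hclamp s)) (abs_zeroMeanCutoff_le _) (abs_nonneg _)
      ((abs_nonneg _).trans (hD _ (hclamp s)))
  have hgφ : EqOn g φ' (Icc a b) := fun s hs => by
    simp [g, hs.1, hs.2, zeroMeanCutoff_of_nonneg, div_nonneg, hδ.le]
  have hg_left : ∀ s ≤ a, g s = φ' a * zeroMeanCutoff (s / δ - a / δ) := fun s hs => by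
    simp [g, hs, hs.trans hab.le, min_eq_left (by linarith : s - a ≤ b - s), sub_div]
  have hg_right : ∀ s ≥ b, g s = φ' b * zeroMeanCutoff (b / δ - s / δ) := fun s hs => by
    simp [g, hs, max_eq_right hab.le, min_eq_right (by linarith : b - s ≤ s - a), sub_div]
  have hW : ∀ y, HasDerivAt (fun y => φ a + ∫ s in a..y, g s) (g y) y := fun y =>
    (hg.integral_hasStrictDerivAt a y).hasDerivAt.const_add _
  have hWφ : ∀ x ∈ Icc a b, ∫ s in a..x, g s = φ x - φ a := fun x hx =>
    intervalIntegral.integral_eq_sub_of_hasDeriv_right_of_le hx.1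
      (hφ.continuousOn.mono (Icc_subset_Icc_right hx.2)) (fun s hs => by
        have hs' : s ∈ Ioo a b := ⟨hs.1, hs.2.trans_le hx.2⟩
        rw [hgφ (Ioo_subset_Icc_self hs')]
        exact (((hφ.differentiableOn one_ne_zero s (Ioo_subset_Icc_self hs')).hasDerivWithinAt
          ).hasDerivAt (Icc_mem_nhds hs'.1 hs'.2)).hasDerivWithinAt)
      (hg.intervalIntegrable _ _)
  refine ⟨fun y => φ a + ∫ s in a..y, g s,
    contDiff_one_iff_deriv.2 ⟨fun y => (hW y).differentiableAt, by
      rw [show deriv _ = g from funext fun y => (hW y).deriv]; exact hg⟩,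
    fun x hx => by simp [hWφ x hx], fun y => (hW y).deriv ▸ hgD y, fun y hy => ?_,
    fun y hy => ?_⟩
  · dsimp only
    rw [intervalIntegral.integral_congr (g := fun s => φ' a * zeroMeanCutoff (s / δ - a / δ))
      fun s hs => hg_left s (by rw [uIcc_of_ge (by linarith)] at hs; exact hs.2),
      intervalIntegral.integral_const_mul, integral_zeroMeanCutoff_div_sub hδ hy, mul_zero,
      add_zero]
  · dsimp only
    rw [← intervalIntegral.integral_add_adjacent_intervals (b := b) (hg.intervalIntegrable _ _)
      (hg.intervalIntegrable _ _), hWφ b ⟨hab.le, le_rfl⟩,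
      intervalIntegral.integral_congr (g := fun s => φ' b * zeroMeanCutoff (b / δ - s / δ))
      fun s hs => hg_right s (by rw [uIcc_of_le (by linarith)] at hs; exact hs.1),
      intervalIntegral.integral_const_mul, integral_zeroMeanCutoff_sub_div hδ hy, mul_zero]
    ring

open Real in
theorem abs_mul_smoothTransition_le {x y C : ℝ} (hC : 0 ≤ C) (h : 0 < y → |x| ≤ C) :
    |x * smoothTransition y| ≤ C := by
  rcases le_or_gt y 0 with hy | hy
  · simpa [smoothTransition.zero_of_nonpos hy] using hC
  · rw [abs_mul, abs_of_nonneg (smoothTransition.nonneg _), ← mul_one C]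
    exact mul_le_mul (h hy) (smoothTransition.le_one _) (smoothTransition.nonneg _) hC

open Real in
theorem exists_contDiff_affine_near_ends {l r m A₁ A₂ σ₁ σ₂ : ℝ} (hm : 0 < m)
    (hlr : l + 3 * m < r) :
    ∃ c : ℝ → ℝ, ContDiff ℝ 1 c ∧
      EqOn c (fun t => A₁ + σ₁ * (t - l)) (Iio (l + m)) ∧
      EqOn c (fun t => A₂ + σ₂ * (t - r)) (Ioi (r - m)) ∧
      ∀ t ∈ Ioo (l - m) (r + m), ∃ z ∈ uIcc A₁ A₂, |c t - z| ≤ 2 * m * (|σ₁| + |σ₂|) := by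
  set s : ℝ → ℝ := fun t => smoothTransition ((t - (l + m)) / (r - l - 2 * m))
  set χ₁ : ℝ → ℝ := fun t => smoothTransition ((l + 2 * m - t) / m)
  set χ₂ : ℝ → ℝ := fun t => smoothTransition ((t - (r - 2 * m)) / m)
  have hd : 0 < r - l - 2 * m := by linarith
  refine ⟨fun t => A₁ + (A₂ - A₁) * s t + σ₁ * (t - l) * χ₁ t + σ₂ * (t - r) * χ₂ t,
    by fun_prop, fun t ht => ?_, fun t ht => ?_, fun t ht => ?_⟩
  · have ht : t < l + m := ht
    have h₁ : s t = 0 := smoothTransition.zero_of_nonpos (div_nonpos_of_nonpos_of_nonneg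
      (by linarith) hd.le)
    have h₂ : χ₁ t = 1 := smoothTransition.one_of_one_le (by rw [le_div_iff₀ hm]; linarith)
    have h₃ : χ₂ t = 0 := smoothTransition.zero_of_nonpos (div_nonpos_of_nonpos_of_nonneg
      (by linarith) hm.le)
    simp only [h₁, h₂, h₃]
    ring
  · have ht : r - m < t := ht
    have h₁ : s t = 1 := smoothTransition.one_of_one_le (by rw [le_div_iff₀ hd]; linarith)
    have h₂ : χ₁ t = 0 := smoothTransition.zero_of_nonpos (div_nonpos_of_nonpos_of_nonneg
      (by linarith) hm.le)
    have h₃ : χ₂ t = 1 := smoothTransition.one_of_one_le (by rw [le_div_iff₀ hm]; linarith)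
    simp only [h₁, h₂, h₃]
    ring
  · have hz : A₁ + (A₂ - A₁) * s t ∈ uIcc A₁ A₂ := by
      rw [← segment_eq_uIcc, segment_eq_image']
      exact ⟨s t, ⟨smoothTransition.nonneg _, smoothTransition.le_one _⟩, by simp [mul_comm]⟩
    have h₁ : |(t - l) * χ₁ t| ≤ 2 * m := abs_mul_smoothTransition_le (by linarith) fun h => by
      rw [div_pos_iff_of_pos_right hm] at h
      exact abs_le.2 ⟨by linarith [ht.1], by linarith⟩
    have h₂ : |(t - r) * χ₂ t| ≤ 2 * m := abs_mul_smoothTransition_le (by linarith) fun h => by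
      rw [div_pos_iff_of_pos_right hm] at h
      exact abs_le.2 ⟨by linarith, by linarith [ht.2]⟩
    refine ⟨_, hz, ?_⟩
    calc |A₁ + (A₂ - A₁) * s t + σ₁ * (t - l) * χ₁ t + σ₂ * (t - r) * χ₂ t
          - (A₁ + (A₂ - A₁) * s t)|
        = |σ₁ * ((t - l) * χ₁ t) + σ₂ * ((t - r) * χ₂ t)| := by ring_nf
      _ ≤ |σ₁| * |(t - l) * χ₁ t| + |σ₂| * |(t - r) * χ₂ t| := by
        rw [← abs_mul, ← abs_mul]; exact abs_add_le _ _
      _ ≤ |σ₁| * (2 * m) + |σ₂| * (2 * m) := by gcongr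
      _ = 2 * m * (|σ₁| + |σ₂|) := by ring

theorem exists_cthickening_image_subset {I : Set ℝ} {φ : ℝ → ℝ} {a b k : ℝ} (hI : IsOpen I)
    (hIc : Convex ℝ I) (hφ : ContinuousOn φ (Icc a b)) (h₀ : MapsTo φ (Icc a b) I)
    (h₁ : ∀ z ∈ Icc a b, φ z + k ∈ I) :
    ∃ ε₀ > 0, Metric.cthickening ε₀ ((fun p : ℝ × ℝ => φ p.1 + p.2 * k) '' (Icc a b ×ˢ Icc 0 1))
      ⊆ I := by
  refine ((isCompact_Icc.prod isCompact_Icc).image_of_continuousOn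
    ((hφ.comp continuousOn_fst fun p hp => hp.1).add (by fun_prop))).exists_cthickening_subset_open
    hI ?_
  rintro _ ⟨⟨z, s⟩, ⟨hz, hs⟩, rfl⟩
  show φ z + s * k ∈ I
  convert hIc (h₀ hz) (h₁ z hz) (sub_nonneg.2 hs.2) hs.1 (by ring) using 1
  simp only [smul_eq_mul]
  ring

theorem add_div_mul_mem_of_cthickening_subset {I : Set ℝ} {φ W : ℝ → ℝ}
    {a b k τ ε ε₀ η t y : ℝ} (hτ : 0 < τ) (hε : 0 ≤ ε)
    (hK : Metric.cthickening ε₀ ((fun p : ℝ × ℝ => φ p.1 + p.2 * k) '' (Icc a b ×ˢ Icc 0 1)) ⊆ I)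
    (hW : ∃ z ∈ Icc a b, |W y - φ z| ≤ η) (ht : t ∈ Ioo (-ε) (τ + ε))
    (hε₀ : η + ε / τ * |k| ≤ ε₀) : W y + k / τ * t ∈ I := by
  obtain ⟨z, hz, hWz⟩ := hW
  set t' := max 0 (min τ t)
  have ht' : |t - t'| ≤ ε := by
    rw [abs_le]
    constructor <;> rcases le_total t 0 with h | h <;> rcases le_total t τ with h' | h' <;>
      simp [t', h, h', hτ.le] <;> linarith [ht.1, ht.2]
  have hK' : φ z + t' / τ * k ∈ (fun p : ℝ × ℝ => φ p.1 + p.2 * k) '' (Icc a b ×ˢ Icc 0 1) :=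
    ⟨(z, t' / τ), ⟨hz, div_nonneg (le_max_left _ _) hτ.le,
      div_le_one_of_le₀ (max_le hτ.le (min_le_left _ _)) hτ.le⟩, rfl⟩
  refine hK (Metric.mem_cthickening_of_dist_le _ _ _ _ hK' ?_)
  rw [Real.dist_eq]
  calc |W y + k / τ * t - (φ z + t' / τ * k)| = |(W y - φ z) + (t - t') / τ * k| := by ring_nf
    _ ≤ η + ε / τ * |k| := by
        refine (abs_add_le _ _).trans (add_le_add hWz ?_)
        rw [abs_mul, abs_div, abs_of_pos hτ]
        gcongr
    _ ≤ ε₀ := hε₀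

theorem exists_duration_margin {a b c D M k tb ε₀ : ℝ} (hab : a < b) (hc : 0 < c)
    (hε₀ : 0 < ε₀) (hDM : D * M * (b - a) < c) (htb : (b - a) / c < tb) :
    ∃ τ ε, 0 < τ ∧ τ < tb ∧ 0 < ε ∧ D * M * (τ + ε) < 1 ∧ ε * D + ε / τ * |k| < ε₀ ∧
      b - a + 2 * ε < τ * c := by
  obtain ⟨τ, hτc, hτtb, hτD⟩ : ∃ τ, (b - a) / c < τ ∧ τ < tb ∧ D * M * τ < 1 := by
    refine (Eventually.and (self_mem_nhdsWithin : ∀ᶠ τ in 𝓝[>] ((b - a) / c), (b - a) / c < τ)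
      (Eventually.filter_mono nhdsWithin_le_nhds ?_)).exists
    exact (eventually_lt_nhds htb).and ((show ContinuousAt (fun τ => D * M * τ) ((b - a) / c)
      by fun_prop).eventually_lt continuousAt_const (by rwa [← mul_div_assoc, div_lt_one hc]))
  have hτ : 0 < τ := (div_pos (sub_pos.2 hab) hc).trans hτc
  rw [div_lt_iff₀ hc] at hτc
  obtain ⟨ε, hε, hεM, hεK, hεc⟩ : ∃ ε, 0 < ε ∧ D * M * (τ + ε) < 1 ∧
      ε * D + ε / τ * |k| < ε₀ ∧ b - a + 2 * ε < τ * c := by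
    refine (Eventually.and (self_mem_nhdsWithin : ∀ᶠ ε in 𝓝[>] (0 : ℝ), 0 < ε)
      (Eventually.filter_mono nhdsWithin_le_nhds ?_)).exists
    refine ((show ContinuousAt (fun ε => D * M * (τ + ε)) 0 by fun_prop).eventually_lt
      continuousAt_const (by simpa using hτD)).and
      (((show ContinuousAt (fun ε => ε * D + ε / τ * |k|) 0 by fun_prop).eventually_lt
      continuousAt_const (by simpa using hε₀)).and
      ((show ContinuousAt (fun ε => b - a + 2 * ε) 0 by fun_prop).eventually_lt
      continuousAt_const (by simpa using hτc)))
  exact ⟨τ, ε, hτ, hτtb, hε, hεM, hεK, hεc⟩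

def ReachesConstantState (I : Set ℝ) (f : ℝ → ℝ) (a b τ : ℝ) (u : ℝ → ℝ → ℝ) : Prop :=
  ∃ ε σ A : ℝ, 0 < ε ∧ A ∈ I ∧
    IsClassicalSolutionOn I f (fun _ => σ) u (Ioo (-ε) (τ + ε) ×ˢ univ) ∧
    ∀ᶠ t in 𝓝 τ, ∀ x ∈ Icc (a - ε) (b + ε), u t x = A + σ * (t - τ)

theorem exists_reachesConstantState {I J : Set ℝ} {f φ : ℝ → ℝ} {M a b D k c tb : ℝ}
    (hI : IsOpen I) (hIc : Convex ℝ I) (hf : ContDiffOn ℝ 2 f I)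
    (hM : ∀ z ∈ I, |deriv (deriv f) z| ≤ M) (hJ : J.OrdConnected) (hJI : J ⊆ I) (hab : a < b)
    (hφ : ContDiffOn ℝ 1 φ (Icc a b)) (hφJ : MapsTo φ (Icc a b) J)
    (hD : ∀ x ∈ Icc a b, |derivWithin φ (Icc a b) x| ≤ D) (hk : k ≠ 0)
    (hkJ : ∀ v ∈ J, v + k ∈ I) (hc : 0 < c) (hΔ : ∀ v ∈ J, c ≤ |(f (v + k) - f v) / k|)
    (hDM : D * M * (b - a) < c) (htb : (b - a) / c < tb) :
    ∃ τ u, 0 < τ ∧ τ < tb ∧ ReachesConstantState I f a b τ u ∧ ∀ x ∈ Icc a b, u 0 x = φ x := by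
  have ha : a ∈ Icc a b := ⟨le_rfl, hab.le⟩
  have hD0 : 0 ≤ D := (abs_nonneg _).trans (hD a ha)
  have hM0 : 0 ≤ M := (abs_nonneg _).trans (hM _ (hJI (hφJ ha)))
  obtain ⟨ε₀, hε₀, hK⟩ := exists_cthickening_image_subset hI hIc hφ.continuousOn
    (fun z hz => hJI (hφJ hz)) fun z hz => hkJ _ (hφJ hz)
  obtain ⟨τ, ε, hτ, hτtb, hε, hεM, hεK, hεc⟩ := exists_duration_margin (k := k) hab hc hε₀ hDM htb
  obtain ⟨W, hW, hWφ, hWD, hWl, hWr⟩ := exists_contDiff_extension hab hφ hD hε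
  have hWl' : ∀ y ≤ a - ε, W y = W (a - ε) := fun y hy => (hWl y hy).trans (hWl _ le_rfl).symm
  have hWr' : ∀ y ≥ b + ε, W y = W (b + ε) := fun y hy => (hWr y hy).trans (hWr _ le_rfl).symm
  have hchar : NoncrossingCharacteristics I f W (k / τ) M (D * M * (τ + ε))
      (Ioo (-ε) (τ + ε)) :=
    { isOpen := hI
      convex := hIc
      contDiffOn := hf
      abs_deriv_deriv_le := hM
      contDiff := hW
      ne_zero := div_ne_zero hk hτ.ne'
      isOpen_times := isOpen_Ioo
      zero_mem := ⟨by linarith, by linarith⟩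
      mem := fun t ht y => add_div_mul_mem_of_cthickening_subset hτ hε.le hK
        (exists_abs_sub_le_of_flat hab.le hε.le (hW.differentiable one_ne_zero) hWD hWφ hWl hWr y)
        ht hεK.le
      lt_one := hεM
      le := fun t ht y => by
        have : |t| ≤ τ + ε := abs_le.2 ⟨by linarith [ht.1], ht.2.le⟩
        calc M * |t| * |deriv W y| ≤ M * (τ + ε) * D :=
              mul_le_mul (mul_le_mul_of_nonneg_left this hM0) (hWD y) (abs_nonneg _)
                (by positivity)
          _ = D * M * (τ + ε) := by ring }
  -- all characteristics move by at least `τ c > b - a + 2 ε`, in one and the same direction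
  have hcross : b + ε < charCurve f W (k / τ) τ (a - ε) ∨
      charCurve f W (k / τ) τ (b + ε) < a - ε := by
    rw [charCurve_div_mul hτ.ne', charCurve_div_mul hτ.ne', hWl _ le_rfl, hWr _ le_rfl]
    rcases hJ.isPreconnected.forall_le_or_forall_le_neg (g := fun v => (f (v + k) - f v) / k)
      (((hf.continuousOn.comp (continuousOn_id.add continuousOn_const) hkJ).sub
      (hf.continuousOn.mono hJI)).div_const k) hc hΔ with hpos | hneg
    · exact Or.inl (by nlinarith [hpos _ (hφJ ha)])
    · exact Or.inr (by nlinarith [hneg _ (hφJ ⟨hab.le, le_rfl⟩)])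
  obtain ⟨A, hA, hev⟩ := hchar.exists_eventually_charSolution_eq ⟨by linarith, by linarith⟩
    hWl' hWr' hcross
  exact ⟨τ, charSolution f W (k / τ), hτ, hτtb,
    ⟨ε, k / τ, A, hε, hA, fun p hp => hchar.isClassicalSolutionAt hp.1, hev⟩,
    fun x hx => by rw [charSolution_zero, hWφ hx]⟩

theorem abs_le_supNorm {g : ℝ → ℝ} {s : Set ℝ} (hs : IsCompact s) (hg : ContinuousOn g s)
    {x : ℝ} (hx : x ∈ s) : |g x| ≤ supNorm g s :=
  le_csSup (hs.image_of_continuousOn hg.abs).bddAbove ⟨x, hx, rfl⟩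

theorem bracketNorm_neg (f : ℝ → ℝ) (I J : Set ℝ) :
    bracketNorm (fun v => -f v) I J = bracketNorm f I J := by
  have h : ∀ k u, |(-f (u + k) - -f u) / k| = |(f (u + k) - f u) / k| := fun k u => by
    rw [← abs_neg, ← neg_div]; ring_nf
  simp only [bracketNorm, h]

theorem exists_of_lt_bracketNorm {f : ℝ → ℝ} {I J : Set ℝ} {L : ℝ} (hL0 : 0 ≤ L)
    (hL : L < bracketNorm f I J) :
    ∃ k c, k ≠ 0 ∧ (∀ v ∈ J, v + k ∈ I) ∧ L < c ∧ ∀ v ∈ J, c ≤ |(f (v + k) - f v) / k| := by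
  have hne : {r : ℝ | ∃ k : ℝ, k ≠ 0 ∧ (fun u => u + k) '' J ⊆ I ∧
      r = sInf ((fun u => |(f (u + k) - f u) / k|) '' J)}.Nonempty := by
    by_contra h
    rw [not_nonempty_iff_eq_empty] at h
    rw [bracketNorm, h, Real.sSup_empty] at hL
    linarith
  obtain ⟨_, ⟨k, hk, hkJ, rfl⟩, hc⟩ := exists_lt_of_lt_csSup hne hL
  exact ⟨k, _, hk, fun v hv => hkJ ⟨v, hv, rfl⟩, hc, fun v hv =>
    csInf_le ⟨0, by rintro _ ⟨_, _, rfl⟩; exact abs_nonneg _⟩ ⟨v, hv, rfl⟩⟩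

theorem mul_mul_lt_of_lt_div {D M β l : ℝ} (hM : 0 ≤ M) (hl : 0 < l) (hβ : 0 < β)
    (h : D < β / (l * M)) : D * M * l < β := by
  rcases hM.eq_or_lt with rfl | hM
  · simpa using hβ
  · rw [lt_div_iff₀ (by positivity)] at h
    linarith

theorem exists_reachesConstantState_of_lt_bracketNorm {I J : Set ℝ} {f φ : ℝ → ℝ}
    {M a b D tb : ℝ} (hI : IsOpen I) (hIc : Convex ℝ I) (hf : ContDiffOn ℝ 2 f I)
    (hM : ∀ z ∈ I, |deriv (deriv f) z| ≤ M) (hJ : J.OrdConnected) (hJI : J ⊆ I) (hab : a < b)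
    (hφ : ContDiffOn ℝ 1 φ (Icc a b)) (hφJ : MapsTo φ (Icc a b) J)
    (hD : ∀ x ∈ Icc a b, |derivWithin φ (Icc a b) x| ≤ D) (hβ : 0 < bracketNorm f I J)
    (hDM : D * M * (b - a) < bracketNorm f I J) (htb : (b - a) / bracketNorm f I J < tb) :
    ∃ τ u, 0 < τ ∧ τ < tb ∧ ReachesConstantState I f a b τ u ∧ ∀ x ∈ Icc a b, u 0 x = φ x := by
  have htb0 : 0 < tb := (div_pos (sub_pos.2 hab) hβ).trans htb
  have hL : (b - a) / tb < bracketNorm f I J := by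
    rw [div_lt_iff₀ htb0]; rw [div_lt_iff₀ hβ] at htb; linarith
  obtain ⟨k, c, hk, hkJ, hLc, hΔ⟩ := exists_of_lt_bracketNorm
    (le_max_of_le_right (div_pos (sub_pos.2 hab) htb0).le) (max_lt hDM hL)
  have hc : 0 < c := (div_pos (sub_pos.2 hab) htb0).trans ((le_max_right _ _).trans_lt hLc)
  refine exists_reachesConstantState hI hIc hf hM hJ hJI hab hφ hφJ hD hk hkJ hc hΔ
    ((le_max_left _ _).trans_lt hLc) ?_
  have := (le_max_right _ _).trans_lt hLc
  rw [div_lt_iff₀ htb0] at this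
  rw [div_lt_iff₀ hc]
  linarith

theorem exists_transition {I : Set ℝ} {A₁ A₂ σ₁ σ₂ l r δ : ℝ} (hI : IsOpen I)
    (hIo : I.OrdConnected) (hA₁ : A₁ ∈ I) (hA₂ : A₂ ∈ I) (hlr : l < r) (hδ : 0 < δ) :
    ∃ m c, 0 < m ∧ m < δ ∧ l + m < r ∧ ContDiff ℝ 1 c ∧
      EqOn c (fun t => A₁ + σ₁ * (t - l)) (Iio (l + m)) ∧
      EqOn c (fun t => A₂ + σ₂ * (t - r)) (Ioi (r - m)) ∧
      ∀ t ∈ Ioo (l - m) (r + m), c t ∈ I := by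
  obtain ⟨εA, hεA, hA⟩ := isCompact_uIcc.exists_cthickening_subset_open hI
    (hIo.uIcc_subset hA₁ hA₂)
  obtain ⟨m, hm, hmδ, hmr, hmA⟩ : ∃ m, 0 < m ∧ m < δ ∧ l + 3 * m < r ∧
      2 * m * (|σ₁| + |σ₂|) < εA := by
    refine (Eventually.and (self_mem_nhdsWithin : ∀ᶠ m in 𝓝[>] (0 : ℝ), 0 < m)
      (Eventually.filter_mono nhdsWithin_le_nhds ?_)).exists
    exact (eventually_lt_nhds hδ).and
      (((show ContinuousAt (fun m => l + 3 * m) 0 by fun_prop).eventually_lt continuousAt_const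
        (by simpa using hlr)).and
      ((show ContinuousAt (fun m => 2 * m * (|σ₁| + |σ₂|)) 0 by fun_prop).eventually_lt
        continuousAt_const (by simpa using hεA)))
  obtain ⟨c, hc, hcl, hcr, hcA⟩ := exists_contDiff_affine_near_ends (A₁ := A₁) (A₂ := A₂)
    (σ₁ := σ₁) (σ₂ := σ₂) hm hmr
  refine ⟨m, c, hm, hmδ, by linarith, hc, hcl, hcr, fun t ht => ?_⟩
  obtain ⟨z, hz, hcz⟩ := hcA t ht
  exact hA (Metric.mem_cthickening_of_dist_le _ z _ _ hz (by rw [Real.dist_eq]; linarith))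

theorem exists_solution_of_reachesConstantState {I : Set ℝ} {f : ℝ → ℝ}
    {u₁ u₂ : ℝ → ℝ → ℝ} {a b τ₁ τ₂ T : ℝ} (hI : IsOpen I) (hIo : I.OrdConnected) (hab : a < b)
    (hτ₁ : 0 ≤ τ₁) (hτ₂ : 0 < τ₂) (hT : τ₁ + τ₂ < T) (hu₁ : ReachesConstantState I f a b τ₁ u₁)
    (hu₂ : ReachesConstantState I (fun v => -f v) a b τ₂ u₂) :
    ∃ (h : ℝ → ℝ) (u : ℝ → ℝ → ℝ), ContinuousOn h (Icc 0 T) ∧ IsClassicalSolution I f h T a b u ∧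
      (∀ x, u 0 x = u₁ 0 x) ∧ ∀ x, u T x = u₂ 0 x := by
  obtain ⟨ε₁, σ₁, A₁, hε₁, hA₁, hsol₁, hev₁⟩ := hu₁
  obtain ⟨ε₂, σ₂, A₂, hε₂, hA₂, hsol₂, hev₂⟩ := hu₂
  obtain ⟨r₁, hr₁, hw₁⟩ := Metric.eventually_nhds_iff.1 hev₁
  obtain ⟨r₂, hr₂, hw₂⟩ := Metric.eventually_nhds_iff.1 hev₂
  set r := T - τ₂
  obtain ⟨m, c, hm, hmδ, hmr, hc, hcl, hcr, hcI⟩ := exists_transition (σ₁ := σ₁) (σ₂ := -σ₂)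
    hI hIo hA₁ hA₂ (by simp only [r]; linarith : τ₁ < r)
    (lt_min (lt_min hε₁ hr₁) (lt_min hε₂ hr₂))
  simp only [lt_min_iff] at hmδ
  have hcl' : ∀ t < τ₁ + m, deriv c t = σ₁ := fun t ht => by simp [hcl.deriv isOpen_Iio ht]
  have hcr' : ∀ t > r - m, deriv c t = -σ₂ := fun t ht => by simp [hcr.deriv isOpen_Ioi ht]
  set X := Ioo (a - m) (b + m)
  have hX : ∀ {ε}, m < ε → X ⊆ Icc (a - ε) (b + ε) := fun hε x hx =>
    ⟨by linarith [hx.1], by linarith [hx.2]⟩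
  -- the source is `c'` throughout; the second stage, solved for `-f`, is run backwards in time
  have h₁ : IsClassicalSolutionOn I f (deriv c) u₁ (Ioo (-ε₁) (τ₁ + m) ×ˢ X) := fun p hp =>
    (hsol₁ p ⟨⟨hp.1.1, by linarith [hp.1.2]⟩, trivial⟩).congr EventuallyEq.rfl
      (hcl' _ hp.1.2).symm
  have h₂ : IsClassicalSolutionOn I f (deriv c) (fun t x => u₂ (T - t) x)
      (Ioo (r - m) (T + ε₂) ×ˢ X) := fun p hp =>
    ((hsol₂.mono (prod_mono_right (subset_univ X))).comp_sub_left (T := T) p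
      ⟨⟨by simp only [r] at hp; linarith [hp.1.1], by linarith [hp.1.2]⟩, hp.2⟩).congr
      EventuallyEq.rfl (hcr' _ hp.1.1).symm
  have hglue := ((h₁.ite isOpen_Ioo (θ := τ₁) (fun p hp => isClassicalSolutionAt_const
    hc.contDiffAt (hcI p.1 hp.1) : IsClassicalSolutionOn I f (deriv c) (fun t _ => c t)
      (Ioo (τ₁ - m) (r + m) ×ˢ X)) (by linarith) (by linarith) fun t ht x hx => by
      rw [hw₁ (by rw [Real.dist_eq, abs_lt]; constructor <;> linarith [ht.1, ht.2]) x
        (hX hmδ.1.1 hx), hcl ht.2]).ite isOpen_Ioo h₂ (θ := r) (by linarith) (by linarith)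
    fun t ht x hx => by
      rw [if_neg (by linarith [ht.1]), hcr ht.1, hw₂ (by rw [Real.dist_eq, abs_lt]; constructor
        <;> simp only [r] at ht <;> linarith [ht.1, ht.2]) x (hX hmδ.2.1 hx)]
      simp only [r]
      ring)
  refine ⟨_, _, (hc.continuous_deriv le_rfl).continuousOn,
    isClassicalSolution_of_isClassicalSolutionOn (by linarith) hab (hglue.mono
      (prod_mono (fun t ht => ⟨by linarith [ht.1], by linarith [ht.2]⟩)
        fun x hx => ⟨by linarith [hx.1], by linarith [hx.2]⟩)), fun x => ?_, fun x => ?_⟩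
  · simp only [if_pos (by linarith : (0 : ℝ) ≤ r), if_pos hτ₁]
  · simp only [if_neg (by simp only [r]; linarith : ¬ T ≤ r), sub_self]

theorem statement0_general
    (I : Set ℝ) (hIopen : IsOpen I) (hIord : I.OrdConnected)
    (f : ℝ → ℝ) (hf : ContDiffOn ℝ 2 f I)
    (hf''bdd : BddAbove ((fun x => |deriv (deriv f) x|) '' I))
    (I₁ I₂ : Set ℝ) (hI₁ : I₁ ⊆ I) (hI₂ : I₂ ⊆ I)
    (hI₁o : I₁.OrdConnected) (hI₂o : I₂.OrdConnected)
    (hb₁ : 0 < bracketNorm f I I₁) (hb₂ : 0 < bracketNorm f I I₂)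
    (a b : ℝ) (hab : a < b)
    (ubar ψ : ℝ → ℝ)
    (hub : ContDiffOn ℝ 1 ubar (Set.Icc a b)) (hψ : ContDiffOn ℝ 1 ψ (Set.Icc a b))
    (him₁ : ubar '' Set.Icc a b ⊂ I₁) (him₂ : ψ '' Set.Icc a b ⊂ I₂)
    (hder₁ : supNorm (fun x => derivWithin ubar (Set.Icc a b) x) (Set.Icc a b)
      < bracketNorm f I I₁ / ((b - a) * supNorm (deriv (deriv f)) I))
    (hder₂ : supNorm (fun x => derivWithin ψ (Set.Icc a b) x) (Set.Icc a b)
      < bracketNorm f I I₂ / ((b - a) * supNorm (deriv (deriv f)) I))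
    (T : ℝ)
    (hT : (b - a) / bracketNorm f I I₁ + (b - a) / bracketNorm f I I₂ < T) :
    ∃ (h : ℝ → ℝ) (u : ℝ → ℝ → ℝ),
      ContinuousOn h (Set.Icc 0 T) ∧
      IsClassicalSolution I f h T a b u ∧
      (∀ x ∈ Set.Icc a b, u 0 x = ubar x) ∧
      (∀ x ∈ Set.Icc a b, u T x = ψ x) := by
  have hba : 0 < b - a := sub_pos.2 hab
  have hM : ∀ z ∈ I, |deriv (deriv f) z| ≤ supNorm (deriv (deriv f)) I :=
    fun z hz => le_csSup hf''bdd ⟨z, hz, rfl⟩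
  have hM0 := (abs_nonneg _).trans (hM _ (hI₁ (him₁.subset ⟨a, ⟨le_rfl, hab.le⟩, rfl⟩)))
  have hD {φ : ℝ → ℝ} (hφ : ContDiffOn ℝ 1 φ (Icc a b)) (x) (hx : x ∈ Icc a b) :=
    abs_le_supNorm isCompact_Icc (hφ.continuousOn_derivWithin (uniqueDiffOn_Icc hab) le_rfl) hx
  obtain ⟨δ, hδ, hδT⟩ : ∃ δ > 0,
      (b - a) / bracketNorm f I I₁ + (b - a) / bracketNorm f I I₂ + 2 * δ < T :=
    ⟨(T - ((b - a) / bracketNorm f I I₁ + (b - a) / bracketNorm f I I₂)) / 3, by linarith,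
      by linarith⟩
  obtain ⟨τ₁, u₁, hτ₁, hτ₁T, hu₁, hu₁0⟩ := exists_reachesConstantState_of_lt_bracketNorm
    hIopen hIord.convex hf hM hI₁o hI₁ hab hub (fun x hx => him₁.subset ⟨x, hx, rfl⟩) (hD hub)
    hb₁ (mul_mul_lt_of_lt_div hM0 hba hb₁ hder₁) (lt_add_of_pos_right _ hδ)
  obtain ⟨τ₂, u₂, hτ₂, hτ₂T, hu₂, hu₂0⟩ := exists_reachesConstantState_of_lt_bracketNorm
    hIopen hIord.convex hf.neg (by simpa [deriv.fun_neg'] using hM) hI₂o hI₂ hab hψ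
    (fun x hx => him₂.subset ⟨x, hx, rfl⟩) (hD hψ) (by rwa [bracketNorm_neg])
    (by rw [bracketNorm_neg]; exact mul_mul_lt_of_lt_div hM0 hba hb₂ hder₂)
    (by rw [bracketNorm_neg]; exact lt_add_of_pos_right _ hδ)
  obtain ⟨h, u, hh, hu, hu0, huT⟩ := exists_solution_of_reachesConstantState (T := T) hIopen
    hIord hab hτ₁.le hτ₂ (by linarith) hu₁ hu₂
  exact ⟨h, u, hh, hu, fun x hx => (hu0 x).trans (hu₁0 x hx),
    fun x hx => (huT x).trans (hu₂0 x hx)⟩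

/-- global controllability of `C¹` states for a general flux with bounded
`f'`, `f''` on the open interval `I`. -/
theorem statement0
    (I : Set ℝ) (hIopen : IsOpen I) (hIord : I.OrdConnected)
    (f : ℝ → ℝ) (hf : ContDiffOn ℝ 2 f I)
    (hf'bdd : BddAbove ((fun x => |deriv f x|) '' I))
    (hf''bdd : BddAbove ((fun x => |deriv (deriv f) x|) '' I))
    (I₁ I₂ : Set ℝ) (hI₁ : I₁ ⊆ I) (hI₂ : I₂ ⊆ I)
    (hI₁o : I₁.OrdConnected) (hI₂o : I₂.OrdConnected)
    (hb₁ : 0 < bracketNorm f I I₁) (hb₂ : 0 < bracketNorm f I I₂)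
    (a b : ℝ) (hab : a < b)
    (ubar ψ : ℝ → ℝ)
    (hub : ContDiffOn ℝ 1 ubar (Set.Icc a b)) (hψ : ContDiffOn ℝ 1 ψ (Set.Icc a b))
    (him₁ : ubar '' Set.Icc a b ⊂ I₁) (him₂ : ψ '' Set.Icc a b ⊂ I₂)
    (hder₁ : supNorm (fun x => derivWithin ubar (Set.Icc a b) x) (Set.Icc a b)
      < bracketNorm f I I₁ / ((b - a) * supNorm (deriv (deriv f)) I))
    (hder₂ : supNorm (fun x => derivWithin ψ (Set.Icc a b) x) (Set.Icc a b)
      < bracketNorm f I I₂ / ((b - a) * supNorm (deriv (deriv f)) I))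
    (T : ℝ)
    (hT : (b - a) / bracketNorm f I I₁ + (b - a) / bracketNorm f I I₂ < T) :
    ∃ (h : ℝ → ℝ) (u : ℝ → ℝ → ℝ),
      ContinuousOn h (Set.Icc 0 T) ∧
      IsClassicalSolution I f h T a b u ∧
      (∀ x ∈ Set.Icc a b, u 0 x = ubar x) ∧
      (∀ x ∈ Set.Icc a b, u T x = ψ x) :=
  statement0_general I hIopen hIord f hf hf''bdd I₁ I₂ hI₁ hI₂ hI₁o hI₂o hb₁ hb₂ a b hab ubar ψ hub
    hψ him₁ him₂ hder₁ hder₂ T hT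
end

section
/- Let I ⊆ ℝ be an open interval containing 0, f : I → ℝ continuously differentiable, a < b, and T₁, T₂ > 0 with T := T₁ + T₂. For i = 1,2 let hᵢ ∈ C⁰([0,Tᵢ]) with hᵢ(Tᵢ) = 0, and let uᵢ ∈ C¹([0,Tᵢ]×[a,b]) be classical solutions of ∂ₜuᵢ + ∂ₓf(uᵢ) = hᵢ(t) on [0,Tᵢ]×[a,b] with uᵢ(Tᵢ,x) = 0 for all x ∈ [a,b]. Define u(t,x) := u₁(t,x) for t ∈ [0,T₁] and u(t,x) := u₂(T−t, a+b−x) for t ∈ [T₁,T], and h(t) := h₁(t) for t ∈ [0,T₁], h(t) := −h₂(T−t) for t ∈ [T₁,T]. Then h is continuous on [0,T], u is continuously differentiable on [0,T]×[a,b], u is a classical solution of ∂ₜu + ∂ₓf(u) = h(t) on [0,T]×[a,b], and u(0,x) = u₁(0,x), u(T,x) = u₂(0, a+b−x) for all x ∈ [a,b]. -/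
/-!
Since `u₁(T₁, ·) ≡ 0`, its `x`-derivative vanishes on `{T₁} × [a, b]`; as `h₁(T₁) = 0`, the
equation then forces the `t`-derivative to vanish too, so the whole derivative of `u₁` is zero
there, and likewise for `u₂` on `{T₂} × [a, b]`. The reversal `(t, x) ↦ (T - t, a + b - x)`
changes the sign of both partial derivatives, so it carries a solution with source `h` to one
with source `-h(T - ·)`. Two `C¹` solutions on adjacent time slabs that agree, with equal
derivatives, on the common edge glue to a `C¹` solution.
-/

open Set Filter MeasureTheory Topology

section Gluing

variable {𝕜 : Type*} [NontriviallyNormedField 𝕜] {E F : Type*}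
  [NormedAddCommGroup E] [NormedSpace 𝕜 E] [NormedAddCommGroup F] [NormedSpace 𝕜 F]

theorem HasFDerivWithinAt.comp_const_sub {φ : E → F} {L : E →L[𝕜] F} {s : Set E} {c p : E}
    (h : HasFDerivWithinAt φ L s (c - p)) :
    HasFDerivWithinAt (fun q => φ (c - q)) (-L) ((c - ·) ⁻¹' s) p := by
  simpa [Function.comp_def] using
    h.comp p ((hasFDerivAt_id p).const_sub c).hasFDerivWithinAt (mapsTo_preimage _ s)

variable {f : E → F} {f'A f'B : E → E →L[𝕜] F} {A B : Set E} [DecidablePred (· ∈ A)]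

theorem hasFDerivWithinAt_union_piecewise (hA : IsClosed A) (hB : IsClosed B)
    (hfA : ∀ p ∈ A, HasFDerivWithinAt f (f'A p) A p)
    (hfB : ∀ p ∈ B, HasFDerivWithinAt f (f'B p) B p) (hAB : EqOn f'A f'B (A ∩ B))
    (p : E) : HasFDerivWithinAt f (A.piecewise f'A f'B p) (A ∪ B) p := by
  refine HasFDerivWithinAt.union ?_ ?_
  · by_cases hpA : p ∈ A
    · simpa [hpA] using hfA p hpA
    · exact .of_notMem_closure (by rwa [hA.closure_eq])
  · by_cases hpB : p ∈ B
    · by_cases hpA : p ∈ A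
      · simpa [hpA, hAB ⟨hpA, hpB⟩] using hfB p hpB
      · simpa [hpA] using hfB p hpB
    · exact .of_notMem_closure (by rwa [hB.closure_eq])

theorem continuousOn_union_piecewise (hA : IsClosed A) (hB : IsClosed B)
    (hcA : ContinuousOn f'A A) (hcB : ContinuousOn f'B B) (hAB : EqOn f'A f'B (A ∩ B)) :
    ContinuousOn (A.piecewise f'A f'B) (A ∪ B) := by
  refine (hcA.congr fun p hp => ?_).union_of_isClosed (hcB.congr fun p hp => ?_) hA hB
  · simp [hp]
  · by_cases hpA : p ∈ A
    · simp [hpA, hAB ⟨hpA, hp⟩]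
    · simp [hpA]

end Gluing

theorem ite_le_eqOn_Ici {α : Type*} {g₁ g₂ : ℝ → α} {m : ℝ} (hm : g₁ m = g₂ m) :
    EqOn (fun t => if t ≤ m then g₁ t else g₂ t) g₂ (Ici m) := by
  intro t ht
  rcases (mem_Ici.1 ht).eq_or_lt with rfl | hmt
  · simp [hm]
  · simp [not_le.2 hmt]

theorem ContinuousOn.ite_le_Icc {α : Type*} [TopologicalSpace α] {g₁ g₂ : ℝ → α} {a m b : ℝ}
    (h₁ : ContinuousOn g₁ (Icc a m)) (h₂ : ContinuousOn g₂ (Icc m b)) (hm : g₁ m = g₂ m) :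
    ContinuousOn (fun t => if t ≤ m then g₁ t else g₂ t) (Icc a b) := by
  have hsub : Icc a b ⊆ Icc a m ∪ Icc m b := fun t ht => by
    rcases le_total t m with htm | hmt
    exacts [Or.inl ⟨ht.1, htm⟩, Or.inr ⟨hmt, ht.2⟩]
  exact (ContinuousOn.union_of_isClosed (h₁.congr fun t ht => if_pos ht.2)
    (h₂.congr fun t ht => ite_le_eqOn_Ici hm ht.1) isClosed_Icc isClosed_Icc).mono hsub

section Partials

variable {𝕜 : Type*} [NontriviallyNormedField 𝕜] {F : Type*} [NormedAddCommGroup F]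
  [NormedSpace 𝕜 F] {u : 𝕜 → 𝕜 → F} {L : 𝕜 × 𝕜 →L[𝕜] F} {s t : Set 𝕜} {x y : 𝕜}

theorem HasFDerivWithinAt.hasDerivWithinAt_partial_left
    (h : HasFDerivWithinAt (fun p : 𝕜 × 𝕜 => u p.1 p.2) L (s ×ˢ t) (x, y)) (hy : y ∈ t) :
    HasDerivWithinAt (fun r => u r y) (L (1, 0)) s x :=
  h.comp_hasDerivWithinAt (f := fun r => (r, y)) x
    ((hasDerivWithinAt_id x s).prodMk (hasDerivWithinAt_const x s y)) fun _ hr => ⟨hr, hy⟩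

theorem HasFDerivWithinAt.hasDerivWithinAt_partial_right
    (h : HasFDerivWithinAt (fun p : 𝕜 × 𝕜 => u p.1 p.2) L (s ×ˢ t) (x, y)) (hx : x ∈ s) :
    HasDerivWithinAt (fun r => u x r) (L (0, 1)) t y :=
  h.comp_hasDerivWithinAt (f := fun r => (x, r)) y
    ((hasDerivWithinAt_const y t x).prodMk (hasDerivWithinAt_id y t)) fun _ hr => ⟨hx, hr⟩

end Partials

/-- A classical solution with its derivative `D` made explicit. Unlike `IsClassicalSolution`
this makes sense on any set, so solutions on adjacent time slabs can be glued. -/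
def IsC1SolutionOn (f h : ℝ → ℝ) (s : Set (ℝ × ℝ)) (u : ℝ → ℝ → ℝ)
    (D : ℝ × ℝ → ℝ × ℝ →L[ℝ] ℝ) : Prop :=
  (∀ p ∈ s, HasFDerivWithinAt (fun q : ℝ × ℝ => u q.1 q.2) (D p) s p) ∧ ContinuousOn D s ∧
    ∀ p ∈ s, D p (1, 0) + deriv f (u p.1 p.2) * D p (0, 1) = h p.1

namespace IsC1SolutionOn

variable {f h : ℝ → ℝ} {s : Set (ℝ × ℝ)} {u : ℝ → ℝ → ℝ} {D : ℝ × ℝ → ℝ × ℝ →L[ℝ] ℝ}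

theorem mono (hu : IsC1SolutionOn f h s u D) {t : Set (ℝ × ℝ)} (hts : t ⊆ s) :
    IsC1SolutionOn f h t u D :=
  ⟨fun p hp => (hu.1 p (hts hp)).mono hts, hu.2.1.mono hts, fun p hp => hu.2.2 p (hts hp)⟩

theorem congr (hu : IsC1SolutionOn f h s u D) {v : ℝ → ℝ → ℝ} {k : ℝ → ℝ}
    (hvu : ∀ p ∈ s, v p.1 p.2 = u p.1 p.2) (hkh : ∀ p ∈ s, k p.1 = h p.1) :
    IsC1SolutionOn f k s v D := by
  refine ⟨fun p hp => (hu.1 p hp).congr hvu (hvu p hp), hu.2.1, fun p hp => ?_⟩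
  rw [hvu p hp, hkh p hp]
  exact hu.2.2 p hp

theorem reverse (hu : IsC1SolutionOn f h s u D) (c : ℝ × ℝ) :
    IsC1SolutionOn f (fun t => -h (c.1 - t)) ((c - ·) ⁻¹' s) (fun t x => u (c.1 - t) (c.2 - x))
      (fun p => -D (c - p)) := by
  refine ⟨fun p hp => (hu.1 (c - p) hp).comp_const_sub, ?_, fun p hp => ?_⟩
  · exact (hu.2.1.comp (f := (c - ·)) (by fun_prop) fun p hp => hp).neg
  · have hc := hu.2.2 (c - p) hp
    simp only [neg_apply, Prod.fst_sub, Prod.snd_sub] at hc ⊢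
    linear_combination -hc

theorem union [DecidablePred (· ∈ s)] {t : Set (ℝ × ℝ)} {D' : ℝ × ℝ → ℝ × ℝ →L[ℝ] ℝ}
    (hs : IsClosed s) (ht : IsClosed t) (hu : IsC1SolutionOn f h s u D)
    (hu' : IsC1SolutionOn f h t u D') (hDD' : EqOn D D' (s ∩ t)) :
    IsC1SolutionOn f h (s ∪ t) u (s.piecewise D D') := by
  refine ⟨fun p _ => hasFDerivWithinAt_union_piecewise hs ht hu.1 hu'.1 hDD' p,
    continuousOn_union_piecewise hs ht hu.2.1 hu'.2.1 hDD', fun p hp => ?_⟩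
  by_cases hps : p ∈ s
  · simpa [hps] using hu.2.2 p hps
  · simpa [hps] using hu'.2.2 p (hp.resolve_left hps)

theorem ite_le {h₁ h₂ : ℝ → ℝ} {u₁ u₂ : ℝ → ℝ → ℝ} {D₁ D₂ : ℝ × ℝ → ℝ × ℝ →L[ℝ] ℝ}
    {t₀ m t₁ : ℝ} {K : Set ℝ} [DecidablePred (· ∈ K)] (hK : IsClosed K)
    (hu₁ : IsC1SolutionOn f h₁ (Icc t₀ m ×ˢ K) u₁ D₁)
    (hu₂ : IsC1SolutionOn f h₂ (Icc m t₁ ×ˢ K) u₂ D₂)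
    (hu : ∀ x ∈ K, u₁ m x = u₂ m x) (hh : h₁ m = h₂ m) (hD : ∀ x ∈ K, D₁ (m, x) = D₂ (m, x)) :
    IsC1SolutionOn f (fun t => if t ≤ m then h₁ t else h₂ t) (Icc t₀ t₁ ×ˢ K)
      (fun t x => if t ≤ m then u₁ t x else u₂ t x) ((Icc t₀ m ×ˢ K).piecewise D₁ D₂) := by
  have hsub : Icc t₀ t₁ ×ˢ K ⊆ Icc t₀ m ×ˢ K ∪ Icc m t₁ ×ˢ K := by
    rintro ⟨t, x⟩ ⟨ht, hx⟩
    rcases le_total t m with htm | hmt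
    exacts [Or.inl ⟨⟨ht.1, htm⟩, hx⟩, Or.inr ⟨⟨hmt, ht.2⟩, hx⟩]
  refine (union (isClosed_Icc.prod hK) (isClosed_Icc.prod hK)
    (hu₁.congr (fun p hp => if_pos hp.1.2) (fun p hp => if_pos hp.1.2))
    (hu₂.congr
      (fun p hp => ite_le_eqOn_Ici (g₁ := (u₁ · p.2)) (g₂ := (u₂ · p.2)) (hu p.2 hp.2) hp.1.1)
      (fun p hp => ite_le_eqOn_Ici (g₁ := h₁) (g₂ := h₂) hh hp.1.1)) ?_).mono hsub
  rintro ⟨t, x⟩ ⟨⟨⟨-, htm⟩, hx⟩, ⟨hmt, -⟩, -⟩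
  obtain rfl : t = m := le_antisymm htm hmt
  exact hD x hx

end IsC1SolutionOn

section ClassicalSolution

variable {I : Set ℝ} {f h : ℝ → ℝ} {T a b : ℝ} {u : ℝ → ℝ → ℝ}

theorem IsC1SolutionOn.isClassicalSolution {D : ℝ × ℝ → ℝ × ℝ →L[ℝ] ℝ} (hT : 0 < T)
    (hab : a < b) (hu : IsC1SolutionOn f h (Icc 0 T ×ˢ Icc a b) u D)
    (hI : ∀ t ∈ Icc 0 T, ∀ x ∈ Icc a b, u t x ∈ I) : IsClassicalSolution I f h T a b u := by
  refine ⟨?_, hI, fun t ht x hx => ?_⟩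
  · rw [show (1 : WithTop ℕ∞) = 0 + 1 from rfl,
      contDiffOn_succ_iff_hasFDerivWithinAt_of_uniqueDiffOn
        ((uniqueDiffOn_Icc hT).prod (uniqueDiffOn_Icc hab))]
    exact ⟨by simp, D, contDiffOn_zero.2 hu.2.1, hu.1⟩
  · have hL := hu.1 (t, x) ⟨ht, hx⟩
    rw [(hL.hasDerivWithinAt_partial_left hx).derivWithin (uniqueDiffOn_Icc hT t ht),
      (hL.hasDerivWithinAt_partial_right ht).derivWithin (uniqueDiffOn_Icc hab x hx)]
    exact hu.2.2 (t, x) ⟨ht, hx⟩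

theorem IsClassicalSolution.isC1SolutionOn (hu : IsClassicalSolution I f h T a b u)
    (hT : 0 < T) (hab : a < b) :
    IsC1SolutionOn f h (Icc 0 T ×ˢ Icc a b) u
      (fderivWithin ℝ (fun p : ℝ × ℝ => u p.1 p.2) (Icc 0 T ×ˢ Icc a b)) := by
  have hS := (uniqueDiffOn_Icc hT).prod (uniqueDiffOn_Icc hab)
  refine ⟨fun p hp => (hu.1.differentiableOn one_ne_zero p hp).hasFDerivWithinAt,
    hu.1.continuousOn_fderivWithin hS le_rfl, ?_⟩
  rintro ⟨t, x⟩ ⟨ht, hx⟩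
  have hL := (hu.1.differentiableOn one_ne_zero (t, x) ⟨ht, hx⟩).hasFDerivWithinAt
  rw [← (hL.hasDerivWithinAt_partial_left hx).derivWithin (uniqueDiffOn_Icc hT t ht),
    ← (hL.hasDerivWithinAt_partial_right ht).derivWithin (uniqueDiffOn_Icc hab x hx)]
  exact hu.2.2 t ht x hx

theorem IsClassicalSolution.fderivWithin_eq_zero_of_terminal
    (hu : IsClassicalSolution I f h T a b u) (hT : 0 < T) (hab : a < b) (hhT : h T = 0)
    (huT : ∀ x ∈ Icc a b, u T x = 0) {x : ℝ} (hx : x ∈ Icc a b) :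
    fderivWithin ℝ (fun p : ℝ × ℝ => u p.1 p.2) (Icc 0 T ×ˢ Icc a b) (T, x) = 0 := by
  have hTT : T ∈ Icc 0 T := right_mem_Icc.2 hT.le
  have hL := (hu.1.differentiableOn one_ne_zero (T, x) ⟨hTT, hx⟩).hasFDerivWithinAt
  have hx0 :
      fderivWithin ℝ (fun p : ℝ × ℝ => u p.1 p.2) (Icc 0 T ×ˢ Icc a b) (T, x) (0, 1) = 0 := by
    rw [← (hL.hasDerivWithinAt_partial_right hTT).derivWithin (uniqueDiffOn_Icc hab x hx),
      derivWithin_congr huT (huT x hx)]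
    simp
  have ht0 := (hu.isC1SolutionOn hT hab).2.2 (T, x) ⟨hTT, hx⟩
  rw [hx0, mul_zero, add_zero, hhT] at ht0
  exact ContinuousLinearMap.prod_ext (ContinuousLinearMap.ext_ring (by simpa using ht0))
    (ContinuousLinearMap.ext_ring (by simpa using hx0))

end ClassicalSolution

theorem statement11_general
    (I : Set ℝ)
    (f : ℝ → ℝ)
    (a b : ℝ) (hab : a < b)
    (T₁ T₂ : ℝ) (hT₁ : 0 < T₁) (hT₂ : 0 < T₂)
    (h₁ h₂ : ℝ → ℝ)
    (hh₁ : ContinuousOn h₁ (Set.Icc 0 T₁)) (hh₂ : ContinuousOn h₂ (Set.Icc 0 T₂))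
    (hh₁T : h₁ T₁ = 0) (hh₂T : h₂ T₂ = 0)
    (u₁ u₂ : ℝ → ℝ → ℝ)
    (hu₁ : IsClassicalSolution I f h₁ T₁ a b u₁)
    (hu₂ : IsClassicalSolution I f h₂ T₂ a b u₂)
    (hu₁T : ∀ x ∈ Set.Icc a b, u₁ T₁ x = 0)
    (hu₂T : ∀ x ∈ Set.Icc a b, u₂ T₂ x = 0) :
    ContinuousOn (fun t => if t ≤ T₁ then h₁ t else -h₂ (T₁ + T₂ - t)) (Set.Icc 0 (T₁ + T₂)) ∧
    IsClassicalSolution I f (fun t => if t ≤ T₁ then h₁ t else -h₂ (T₁ + T₂ - t)) (T₁ + T₂) a b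
      (fun t x => if t ≤ T₁ then u₁ t x else u₂ (T₁ + T₂ - t) (a + b - x)) ∧
    (∀ x ∈ Set.Icc a b,
      (fun t x => if t ≤ T₁ then u₁ t x else u₂ (T₁ + T₂ - t) (a + b - x)) 0 x = u₁ 0 x) ∧
    (∀ x ∈ Set.Icc a b,
      (fun t x => if t ≤ T₁ then u₁ t x else u₂ (T₁ + T₂ - t) (a + b - x)) (T₁ + T₂) x
        = u₂ 0 (a + b - x)) := by
  set T := T₁ + T₂ with hT
  have hrev_t : MapsTo (T - ·) (Icc T₁ T) (Icc 0 T₂) := fun t ht =>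
    ⟨by linarith [ht.2], by linarith [ht.1]⟩
  have hrev_x : MapsTo (a + b - ·) (Icc a b) (Icc a b) := fun x hx =>
    ⟨by linarith [hx.2], by linarith [hx.1]⟩
  have hsol₂ := ((hu₂.isC1SolutionOn hT₂ hab).reverse (T, a + b)).mono
    (t := Icc T₁ T ×ˢ Icc a b) fun p hp => ⟨hrev_t hp.1, hrev_x hp.2⟩
  have hsol := (hu₁.isC1SolutionOn hT₁ hab).ite_le isClosed_Icc hsol₂
    (fun x hx => by simp [hu₁T x hx, hT, hu₂T _ (hrev_x hx)]) (by simp [hh₁T, hT, hh₂T])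
    (fun x hx => by
      simp only [Prod.mk_sub_mk, show T - T₁ = T₂ by rw [hT]; ring,
        hu₁.fderivWithin_eq_zero_of_terminal hT₁ hab hh₁T hu₁T hx,
        hu₂.fderivWithin_eq_zero_of_terminal hT₂ hab hh₂T hu₂T (hrev_x hx), neg_zero])
  have hI : ∀ t ∈ Icc 0 T, ∀ x ∈ Icc a b,
      (if t ≤ T₁ then u₁ t x else u₂ (T - t) (a + b - x)) ∈ I := by
    intro t ht x hx
    rcases le_or_gt t T₁ with htT | hTt
    · simpa only [if_pos htT] using hu₁.2.1 t ⟨ht.1, htT⟩ x hx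
    · simpa only [if_neg hTt.not_ge] using hu₂.2.1 _ (hrev_t ⟨hTt.le, ht.2⟩) _ (hrev_x hx)
  refine ⟨hh₁.ite_le_Icc (hh₂.comp (by fun_prop) hrev_t).neg (by simp [hh₁T, hT, hh₂T]),
    hsol.isClassicalSolution (by positivity) hab hI, fun x _ => if_pos hT₁.le,
    fun x _ => by simp [hT, hT₂.not_ge]⟩

/-- gluing a solution reaching the zero state with the reversal of a second
solution reaching the zero state produces a `C¹` classical solution on `[0, T₁+T₂]`. -/
theorem statement11
    (I : Set ℝ) (hIopen : IsOpen I) (hIord : I.OrdConnected) (h0I : (0 : ℝ) ∈ I)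
    (f : ℝ → ℝ) (hf : ContDiffOn ℝ 1 f I)
    (a b : ℝ) (hab : a < b)
    (T₁ T₂ : ℝ) (hT₁ : 0 < T₁) (hT₂ : 0 < T₂)
    (h₁ h₂ : ℝ → ℝ)
    (hh₁ : ContinuousOn h₁ (Set.Icc 0 T₁)) (hh₂ : ContinuousOn h₂ (Set.Icc 0 T₂))
    (hh₁T : h₁ T₁ = 0) (hh₂T : h₂ T₂ = 0)
    (u₁ u₂ : ℝ → ℝ → ℝ)
    (hu₁ : IsClassicalSolution I f h₁ T₁ a b u₁)
    (hu₂ : IsClassicalSolution I f h₂ T₂ a b u₂)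
    (hu₁T : ∀ x ∈ Set.Icc a b, u₁ T₁ x = 0)
    (hu₂T : ∀ x ∈ Set.Icc a b, u₂ T₂ x = 0) :
    ContinuousOn (fun t => if t ≤ T₁ then h₁ t else -h₂ (T₁ + T₂ - t)) (Set.Icc 0 (T₁ + T₂)) ∧
    IsClassicalSolution I f (fun t => if t ≤ T₁ then h₁ t else -h₂ (T₁ + T₂ - t)) (T₁ + T₂) a b
      (fun t x => if t ≤ T₁ then u₁ t x else u₂ (T₁ + T₂ - t) (a + b - x)) ∧
    (∀ x ∈ Set.Icc a b,
      (fun t x => if t ≤ T₁ then u₁ t x else u₂ (T₁ + T₂ - t) (a + b - x)) 0 x = u₁ 0 x) ∧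
    (∀ x ∈ Set.Icc a b,
      (fun t x => if t ≤ T₁ then u₁ t x else u₂ (T₁ + T₂ - t) (a + b - x)) (T₁ + T₂) x
        = u₂ 0 (a + b - x)) :=
  statement11_general I f a b hab T₁ T₂ hT₁ hT₂ h₁ h₂ hh₁ hh₂ hh₁T hh₂T u₁ u₂ hu₁ hu₂ hu₁T hu₂T
end

section
/- Let I ⊆ ℝ be an open interval, a < b, M > 0, and let φ ∈ BV([a,b]) with Im(φ) ⊊ I satisfy D⁺φ(x) < M for all x ∈ [a,b]. Then there exists a sequence (φₙ)_{n≥1} ⊂ C¹([a,b]) such that Im(φₙ) ⊆ I for all sufficiently large n, φₙ'(x) < M for all x ∈ [a,b] and all n ≥ 1, and φₙ → φ in L¹([a,b]). -/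
open Set Filter MeasureTheory Topology

/-!
The Dini bound makes `t ↦ M t - φ t` nondecreasing on `[a, b]` (a continuous induction over the
interval), so the extension `ψ` of `φ` that is constant outside `[a, b]` satisfies
`ψ t - ψ s ≤ M (t - s)` for `s ≤ t`. Averaging `ψ` twice over the windows `[x - ε, x]` gives a
`C¹` function (one average is only continuous) that keeps this slope bound, hence has derivative
`≤ M`, and whose values lie between `inf ψ` and `sup ψ`. Writing `ψ = M t - g` with `g` monotone,
each average loses at most `O(ε)` in `L¹([a, b])`. Finally, contracting by the factor `1 - ε`
towards a point `z ∈ I` makes the derivative bound strict and moves the values into `I` even when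
`inf φ` or `sup φ` is an endpoint of `I`.
-/

open intervalIntegral

lemma monotoneOn_Icc_of_forall_eventually {a b : ℝ} {g : ℝ → ℝ}
    (hg : ∀ c ∈ Icc a b, ∀ᶠ z in 𝓝[Icc a b] c, (c ≤ z → g c ≤ g z) ∧ (z ≤ c → g z ≤ g c)) :
    MonotoneOn g (Icc a b) := by
  intro x hx y hy hxy
  set S := {z ∈ Icc x y | g x ≤ g z}
  have hxS : x ∈ S := ⟨⟨le_rfl, hxy⟩, le_rfl⟩
  have hbdd : BddAbove S := ⟨y, fun z hz => hz.1.2⟩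
  -- `c ∈ S` by monotonicity to the left of `c`, and `c = y` by monotonicity to its right.
  set c := sSup S
  have hxc : x ≤ c := le_csSup hbdd hxS
  have hcy : c ≤ y := csSup_le ⟨x, hxS⟩ fun z hz => hz.1.2
  obtain ⟨δ, hδ, hloc⟩ := Metric.eventually_nhds_iff.1
    (eventually_nhdsWithin_iff.1 (hg c ⟨hx.1.trans hxc, hcy.trans hy.2⟩))
  have hzab : ∀ z ∈ Icc x y, z ∈ Icc a b := fun z hz => ⟨hx.1.trans hz.1, hz.2.trans hy.2⟩
  have hcS : g x ≤ g c := by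
    rcases hxc.eq_or_lt with hxc | hxc
    · rw [hxc]
    obtain ⟨z, hzS, hz⟩ := exists_lt_of_lt_csSup ⟨x, hxS⟩ (max_lt hxc (sub_lt_self c hδ))
    have hzc : z ≤ c := le_csSup hbdd hzS
    have hdist : dist z c < δ := by
      rw [Real.dist_eq, abs_lt]; constructor <;> linarith [le_max_right x (c - δ)]
    exact hzS.2.trans ((hloc hdist (hzab z hzS.1)).2 hzc)
  rcases hcy.eq_or_lt with hcy | hcy
  · rwa [← hcy]
  obtain ⟨z, hcz, hz⟩ := exists_between (lt_min hcy (lt_add_of_pos_right c hδ))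
  have hzy : z ∈ Icc x y := ⟨hxc.trans hcz.le, hz.le.trans (min_le_left _ _)⟩
  have hdist : dist z c < δ := by
    rw [Real.dist_eq, abs_lt]; constructor <;> linarith [min_le_right y (c + δ)]
  have hzS : z ∈ S := ⟨hzy, hcS.trans ((hloc hdist (hzab z hzy)).1 hcz.le)⟩
  exact absurd (le_csSup hbdd hzS) hcz.not_ge

lemma eventually_mul_sub_le_of_upperDini_lt {φ : ℝ → ℝ} {s : Set ℝ} {c M : ℝ}
    (h : upperDini φ s c < M) :
    ∀ᶠ z in 𝓝[s] c, (c ≤ z → M * c - φ c ≤ M * z - φ z) ∧ (z ≤ c → M * z - φ z ≤ M * c - φ c) := by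
  obtain ⟨δ, hδ, hslope⟩ := Metric.eventually_nhds_iff.1
    (eventually_nhdsWithin_iff.1 (eventually_lt_of_limsup_lt h))
  rw [eventually_nhdsWithin_iff, Metric.eventually_nhds_iff]
  refine ⟨δ, hδ, fun {z} hz hzs => ?_⟩
  rcases eq_or_ne z c with rfl | hne
  · simp
  have hk := EReal.coe_lt_coe_iff.1 (hslope (y := z - c) (by simpa [Real.dist_eq] using hz)
    ⟨sub_ne_zero.2 hne, by simpa using hzs⟩)
  rw [add_sub_cancel] at hk
  constructor
  · intro hcz
    have := (div_lt_iff₀ (sub_pos.2 (lt_of_le_of_ne hcz hne.symm))).1 hk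
    linarith
  · intro hzc
    have := (div_lt_iff_of_neg (sub_neg.2 (lt_of_le_of_ne hzc hne))).1 hk
    linarith

lemma monotoneOn_mul_sub_of_upperDini_lt {φ : ℝ → ℝ} {a b M : ℝ}
    (h : ∀ x ∈ Icc a b, upperDini φ (Icc a b) x < M) :
    MonotoneOn (fun t => M * t - φ t) (Icc a b) :=
  monotoneOn_Icc_of_forall_eventually fun c hc => eventually_mul_sub_le_of_upperDini_lt (h c hc)

lemma MonotoneOn.monotone_mul_sub_comp_projIcc {φ : ℝ → ℝ} {a b M : ℝ} (hab : a ≤ b)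
    (hM : 0 ≤ M) (hφ : MonotoneOn (fun t => M * t - φ t) (Icc a b)) :
    Monotone fun t => M * t - φ (projIcc a b hab t) := by
  intro s t hst
  have hp : (projIcc a b hab s : ℝ) ≤ projIcc a b hab t := monotone_projIcc hab hst
  have h1 := hφ (projIcc a b hab s).2 (projIcc a b hab t).2 hp
  have h2 : (projIcc a b hab t : ℝ) - projIcc a b hab s ≤ t - s :=
    (le_abs_self _).trans
      ((abs_projIcc_sub_projIcc hab).trans_eq (abs_of_nonneg (sub_nonneg.2 hst)))
  simp only at h1 ⊢
  nlinarith [mul_le_mul_of_nonneg_left h2 hM]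

lemma MeasureTheory.LocallyIntegrable.intervalIntegrable {f : ℝ → ℝ} (hf : LocallyIntegrable f)
    (a b : ℝ) : IntervalIntegrable f volume a b :=
  (hf.integrableOn_isCompact isCompact_uIcc).intervalIntegrable

noncomputable def leftAvg (h : ℝ) (f : ℝ → ℝ) (x : ℝ) : ℝ :=
  h⁻¹ * ∫ t in (x - h)..x, f t

section leftAvg

variable {h : ℝ} {f g : ℝ → ℝ}

lemma leftAvg_eq_sub_primitive (hf : LocallyIntegrable f) (x : ℝ) :
    leftAvg h f x = h⁻¹ * ((∫ t in (0 : ℝ)..x, f t) - ∫ t in (0 : ℝ)..(x - h), f t) := by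
  rw [integral_interval_sub_left (hf.intervalIntegrable _ _) (hf.intervalIntegrable _ _), leftAvg]

lemma mul_leftAvg (hh : h ≠ 0) (x : ℝ) : h * leftAvg h f x = ∫ t in (x - h)..x, f t := by
  rw [leftAvg, mul_inv_cancel_left₀ hh]

lemma continuous_leftAvg (hf : LocallyIntegrable f) : Continuous (leftAvg h f) := by
  have hP := continuous_primitive (fun p q => hf.intervalIntegrable p q) 0
  rw [funext (leftAvg_eq_sub_primitive hf)]
  exact continuous_const.mul (hP.sub (hP.comp (continuous_sub_right h)))

lemma hasDerivAt_leftAvg (hf : Continuous f) (x : ℝ) :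
    HasDerivAt (leftAvg h f) (h⁻¹ * (f x - f (x - h))) x := by
  have hP : ∀ y, HasDerivAt (fun z => ∫ t in (0 : ℝ)..z, f t) (f y) y := fun y =>
    (hf.integral_hasStrictDerivAt 0 y).hasDerivAt
  rw [funext (leftAvg_eq_sub_primitive hf.locallyIntegrable)]
  simpa using (((hP x).sub ((hP (x - h)).comp_sub_const x h))).const_mul h⁻¹

lemma contDiff_leftAvg (hf : Continuous f) : ContDiff ℝ 1 (leftAvg h f) := by
  rw [contDiff_one_iff_deriv]
  refine ⟨fun x => (hasDerivAt_leftAvg hf x).differentiableAt, ?_⟩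
  rw [show deriv (leftAvg h f) = _ from funext fun x => (hasDerivAt_leftAvg hf x).deriv]
  exact continuous_const.mul (hf.sub (hf.comp (continuous_sub_right h)))

lemma leftAvg_le (hh : 0 < h) (hf : LocallyIntegrable f) {c x : ℝ}
    (hc : ∀ t ∈ Icc (x - h) x, f t ≤ c) : leftAvg h f x ≤ c := by
  have := integral_mono_on (by linarith) (hf.intervalIntegrable _ _) intervalIntegrable_const hc
  rw [intervalIntegral.integral_const, smul_eq_mul, sub_sub_cancel] at this
  rwa [leftAvg, inv_mul_le_iff₀ hh]

lemma le_leftAvg (hh : 0 < h) (hf : LocallyIntegrable f) {c x : ℝ}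
    (hc : ∀ t ∈ Icc (x - h) x, c ≤ f t) : c ≤ leftAvg h f x := by
  have := integral_mono_on (by linarith) intervalIntegrable_const (hf.intervalIntegrable _ _) hc
  rw [intervalIntegral.integral_const, smul_eq_mul, sub_sub_cancel] at this
  rwa [leftAvg, le_inv_mul_iff₀ hh]

lemma leftAvg_mono (hh : 0 ≤ h) (hf : LocallyIntegrable f) (hg : LocallyIntegrable g)
    (hfg : f ≤ g) : leftAvg h f ≤ leftAvg h g := fun x =>
  mul_le_mul_of_nonneg_left (integral_mono_on (by linarith) (hf.intervalIntegrable _ _)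
    (hg.intervalIntegrable _ _) fun t _ => hfg t) (inv_nonneg.2 hh)

lemma leftAvg_comp_add_right (d x : ℝ) :
    leftAvg h (fun t => f (t + d)) x = leftAvg h f (x + d) := by
  rw [leftAvg, leftAvg, integral_comp_add_right, sub_add_eq_add_sub]

lemma leftAvg_mul_add_sub (hh : h ≠ 0) (hg : LocallyIntegrable g) (M c x : ℝ) :
    leftAvg h (fun t => M * t + c - g t) x = M * x + c - M * h / 2 - leftAvg h g x := by
  rw [leftAvg, intervalIntegral.integral_sub (Continuous.intervalIntegrable (by fun_prop) _ _)
    (hg.intervalIntegrable _ _), integral_add ((continuous_const_mul M).intervalIntegrable _ _)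
    intervalIntegrable_const, intervalIntegral.integral_const_mul, integral_id,
    intervalIntegral.integral_const, smul_eq_mul, leftAvg]
  field_simp
  ring

lemma Monotone.leftAvg_le_self (hg : Monotone g) (hh : 0 < h) (x : ℝ) : leftAvg h g x ≤ g x :=
  leftAvg_le hh hg.locallyIntegrable fun _ ht => hg ht.2

lemma Monotone.apply_sub_le_leftAvg (hg : Monotone g) (hh : 0 < h) (x : ℝ) :
    g (x - h) ≤ leftAvg h g x :=
  le_leftAvg hh hg.locallyIntegrable fun _ ht => hg ht.1

lemma monotone_leftAvg (hh : 0 < h) (hg : Monotone g) : Monotone (leftAvg h g) := by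
  intro x y hxy
  have := leftAvg_mono hh.le hg.locallyIntegrable
    (g := fun t => g (t + (y - x))) (hg.comp (monotone_id.add_const (y - x))).locallyIntegrable
    (fun t => hg (by linarith : t ≤ t + (y - x))) x
  rwa [leftAvg_comp_add_right, add_sub_cancel] at this

lemma integral_sub_comp_sub_right (hh : h ≠ 0) (hf : LocallyIntegrable f) (a b : ℝ) :
    ∫ x in a..b, (f x - f (x - h)) = h * leftAvg h f b - h * leftAvg h f a := by
  have hshift : IntervalIntegrable (fun x => f (x - h)) volume a b := by
    simpa using (hf.intervalIntegrable (a - h) (b - h)).comp_sub_right h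
  rw [intervalIntegral.integral_sub (hf.intervalIntegrable _ _) hshift,
    integral_comp_sub_right, integral_interval_sub_interval_comm' (hf.intervalIntegrable _ _)
    (hf.intervalIntegrable _ _) (hf.intervalIntegrable _ _), mul_leftAvg hh, mul_leftAvg hh]

end leftAvg

section monotone

variable {h a b : ℝ} {g : ℝ → ℝ}

lemma Monotone.integral_sub_leftAvg_le (hg : Monotone g) (hh : 0 < h) (hab : a ≤ b) :
    ∫ x in a..b, (g x - leftAvg h g x) ≤ h * (g b - g (a - h)) :=
  calc ∫ x in a..b, (g x - leftAvg h g x)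
      ≤ ∫ x in a..b, (g x - g (x - h)) :=
        integral_mono_on hab ((hg.intervalIntegrable).sub
          ((continuous_leftAvg hg.locallyIntegrable).intervalIntegrable _ _))
          (hg.intervalIntegrable.sub (show Monotone fun x => g (x - h) from
            fun _ _ hxy => hg (sub_le_sub_right hxy h)).intervalIntegrable)
          fun x _ => by linarith [hg.apply_sub_le_leftAvg hh x]
    _ = h * leftAvg h g b - h * leftAvg h g a :=
        integral_sub_comp_sub_right hh.ne' hg.locallyIntegrable a b
    _ ≤ h * (g b - g (a - h)) := by
        rw [mul_sub]
        exact sub_le_sub (mul_le_mul_of_nonneg_left (hg.leftAvg_le_self hh b) hh.le)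
          (mul_le_mul_of_nonneg_left (hg.apply_sub_le_leftAvg hh a) hh.le)

lemma Monotone.integral_sub_leftAvg_leftAvg_le (hg : Monotone g) (hh : 0 < h) (hab : a ≤ b) :
    ∫ x in a..b, (g x - leftAvg h (leftAvg h g) x) ≤ 2 * h * (g b - g (a - 2 * h)) := by
  have hAg := monotone_leftAvg hh hg
  have hsplit : ∫ x in a..b, (g x - leftAvg h (leftAvg h g) x)
      = (∫ x in a..b, (g x - leftAvg h g x))
        + ∫ x in a..b, (leftAvg h g x - leftAvg h (leftAvg h g) x) := by
    rw [← integral_add (hg.intervalIntegrable.sub hAg.intervalIntegrable)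
      (hAg.intervalIntegrable.sub (monotone_leftAvg hh hAg).intervalIntegrable)]
    exact integral_congr fun x _ => by ring
  have h1 := hg.integral_sub_leftAvg_le hh hab
  have h2 := hAg.integral_sub_leftAvg_le hh hab
  have h3 : leftAvg h g b ≤ g b := hg.leftAvg_le_self hh b
  have h4 : g (a - 2 * h) ≤ leftAvg h g (a - h) := by
    simpa [sub_sub, two_mul] using hg.apply_sub_le_leftAvg hh (a - h)
  have h5 : g (a - 2 * h) ≤ g (a - h) := hg (by linarith)
  nlinarith

end monotone

section slopeBound

variable {M h : ℝ} {ψ : ℝ → ℝ}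

lemma leftAvg_eq_mul_sub_leftAvg (hh : h ≠ 0) (hψ : LocallyIntegrable ψ) (M x : ℝ) :
    leftAvg h ψ x = M * x - M * h / 2 - leftAvg h (fun t => M * t - ψ t) x := by
  simpa using leftAvg_mul_add_sub (g := fun t => M * t - ψ t) hh
    ((continuous_const_mul M).locallyIntegrable.sub hψ) M 0 x

lemma leftAvg_leftAvg_eq_mul_sub (hh : h ≠ 0) (hψ : LocallyIntegrable ψ) (M x : ℝ) :
    leftAvg h (leftAvg h ψ) x
      = M * x - M * h - leftAvg h (leftAvg h fun t => M * t - ψ t) x := by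
  have hg : LocallyIntegrable fun t => M * t - ψ t :=
    (continuous_const_mul M).locallyIntegrable.sub hψ
  have hAψ : leftAvg h ψ = fun t => M * t + -(M * h / 2) - leftAvg h (fun t => M * t - ψ t) t := by
    funext t
    rw [leftAvg_eq_mul_sub_leftAvg hh hψ M]
    ring
  rw [hAψ, leftAvg_mul_add_sub hh (continuous_leftAvg hg).locallyIntegrable]
  ring

lemma locallyIntegrable_of_monotone_mul_sub (hψ : Monotone fun t => M * t - ψ t) :
    LocallyIntegrable ψ := by
  have := (continuous_const_mul M).locallyIntegrable.sub (hψ.locallyIntegrable (μ := volume))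
  rwa [show ((fun t => M * t) - fun t => M * t - ψ t) = ψ by funext t; simp] at this

lemma monotone_mul_sub_leftAvg (hψ : Monotone fun t => M * t - ψ t) (hh : 0 < h) :
    Monotone fun t => M * t - leftAvg h ψ t := by
  have key : ∀ t, M * t - leftAvg h ψ t = M * h / 2 + leftAvg h (fun t => M * t - ψ t) t :=
    fun t => by
      rw [leftAvg_eq_mul_sub_leftAvg hh.ne' (locallyIntegrable_of_monotone_mul_sub hψ) M t]
      ring
  simpa only [key] using (monotone_leftAvg hh hψ).const_add (M * h / 2)

lemma deriv_leftAvg_leftAvg_le (hψ : Monotone fun t => M * t - ψ t) (hh : 0 < h) (x : ℝ) :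
    deriv (leftAvg h (leftAvg h ψ)) x ≤ M := by
  rw [(hasDerivAt_leftAvg (continuous_leftAvg (locallyIntegrable_of_monotone_mul_sub hψ)) x).deriv,
    inv_mul_le_iff₀ hh]
  have := monotone_mul_sub_leftAvg hψ hh (sub_le_self x hh.le)
  linarith

lemma integral_abs_leftAvg_leftAvg_sub_le (hψ : Monotone fun t => M * t - ψ t) {a b : ℝ}
    (hab : a ≤ b) (hh : 0 < h) (hh1 : h ≤ 1) :
    ∫ x in a..b, |leftAvg h (leftAvg h ψ) x - ψ x|
      ≤ (|M| * (b - a) + 2 * ((M * b - ψ b) - (M * (a - 2) - ψ (a - 2)))) * h := by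
  set g := fun t => M * t - ψ t
  have hψloc := locallyIntegrable_of_monotone_mul_sub hψ
  have hAAg := monotone_leftAvg hh (monotone_leftAvg hh hψ)
  have hpt : ∀ x, |leftAvg h (leftAvg h ψ) x - ψ x|
      ≤ |M| * h + (g x - leftAvg h (leftAvg h g) x) := by
    intro x
    have hle : leftAvg h (leftAvg h g) x ≤ g x :=
      ((monotone_leftAvg hh hψ).leftAvg_le_self hh x).trans (hψ.leftAvg_le_self hh x)
    rw [leftAvg_leftAvg_eq_mul_sub hh.ne' hψloc M x, abs_le]
    constructor <;> nlinarith [le_abs_self M, neg_abs_le M]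
  calc ∫ x in a..b, |leftAvg h (leftAvg h ψ) x - ψ x|
      ≤ ∫ x in a..b, (|M| * h + (g x - leftAvg h (leftAvg h g) x)) :=
        integral_mono_on hab
          (((continuous_leftAvg (continuous_leftAvg hψloc).locallyIntegrable).intervalIntegrable
            _ _).sub (hψloc.intervalIntegrable _ _)).abs
          (intervalIntegrable_const.add (hψ.intervalIntegrable.sub hAAg.intervalIntegrable))
          fun x _ => hpt x
    _ = (b - a) * (|M| * h) + ∫ x in a..b, (g x - leftAvg h (leftAvg h g) x) := by
        rw [integral_add intervalIntegrable_const
          (hψ.intervalIntegrable.sub hAAg.intervalIntegrable), intervalIntegral.integral_const,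
          smul_eq_mul]
    _ ≤ (b - a) * (|M| * h) + 2 * h * (g b - g (a - 2 * h)) := by
        linarith [hψ.integral_sub_leftAvg_leftAvg_le hh hab]
    _ ≤ (|M| * (b - a) + 2 * (g b - g (a - 2))) * h := by
        have : g (a - 2) ≤ g (a - 2 * h) := hψ (by linarith)
        nlinarith

lemma tendsto_integral_abs_leftAvg_leftAvg_sub (hψ : Monotone fun t => M * t - ψ t) {a b : ℝ}
    (hab : a ≤ b) :
    Tendsto (fun h => ∫ x in a..b, |leftAvg h (leftAvg h ψ) x - ψ x|) (𝓝[>] 0) (𝓝 0) := by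
  set C := |M| * (b - a) + 2 * ((M * b - ψ b) - (M * (a - 2) - ψ (a - 2)))
  have hlim : Tendsto (fun h => C * h) (𝓝[>] 0) (𝓝 0) := by
    simpa using (tendsto_nhdsWithin_of_tendsto_nhds (continuous_const_mul C).continuousAt.tendsto :
      Tendsto (fun h => C * h) (𝓝[>] 0) (𝓝 (C * 0)))
  refine squeeze_zero' (Eventually.of_forall fun h =>
    intervalIntegral.integral_nonneg hab fun x _ => abs_nonneg _) ?_ hlim
  filter_upwards [Ioc_mem_nhdsGT zero_lt_one] with h hh
  exact integral_abs_leftAvg_leftAvg_sub_le hψ hab hh.1 hh.2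

end slopeBound

lemma Set.OrdConnected.one_sub_mul_add_mul_mem {I J : Set ℝ} (hI : I.OrdConnected) (hJ : J ⊆ I)
    {z v ε : ℝ} (hz : z ∈ I) (hε : 0 < ε) (hε1 : ε ≤ 1)
    (hlow : ∀ w ∈ lowerBounds J, w ≤ v) (hup : ∀ w ∈ upperBounds J, v ≤ w) :
    (1 - ε) * v + ε * z ∈ I := by
  set w := (1 - ε) * v + ε * z
  rcases lt_trichotomy v z with hvz | rfl | hzv
  · obtain ⟨p, hpJ, hpw⟩ : ∃ p ∈ J, p < w := by
      by_contra! H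
      exact (hlow w H).not_gt (by nlinarith)
    exact hI.out (hJ hpJ) hz ⟨hpw.le, by nlinarith⟩
  · rwa [show w = v by ring]
  · obtain ⟨p, hpJ, hpw⟩ : ∃ p ∈ J, w < p := by
      by_contra! H
      exact (hup w H).not_gt (by nlinarith)
    exact hI.out hz (hJ hpJ) ⟨by nlinarith, hpw.le⟩

noncomputable def regularize (ψ : ℝ → ℝ) (z ε : ℝ) (x : ℝ) : ℝ :=
  (1 - ε) * leftAvg ε (leftAvg ε ψ) x + ε * z

section regularize

variable {M z ε : ℝ} {ψ : ℝ → ℝ}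

lemma contDiff_regularize (hψ : LocallyIntegrable ψ) : ContDiff ℝ 1 (regularize ψ z ε) :=
  (contDiff_const.mul (contDiff_leftAvg (continuous_leftAvg hψ))).add contDiff_const

lemma deriv_regularize_lt (hψ : Monotone fun t => M * t - ψ t) (hM : 0 < M) (hε : 0 < ε)
    (hε1 : ε ≤ 1) (x : ℝ) : deriv (regularize ψ z ε) x < M := by
  have hAψ := continuous_leftAvg (h := ε) (locallyIntegrable_of_monotone_mul_sub hψ)
  have hd : HasDerivAt (regularize ψ z ε) ((1 - ε) * deriv (leftAvg ε (leftAvg ε ψ)) x) x :=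
    (((contDiff_leftAvg hAψ).differentiable one_ne_zero x).hasDerivAt.const_mul _).add_const _
  rw [hd.deriv]
  calc (1 - ε) * deriv (leftAvg ε (leftAvg ε ψ)) x
      ≤ (1 - ε) * M := mul_le_mul_of_nonneg_left (deriv_leftAvg_leftAvg_le hψ hε x) (by linarith)
    _ < M := by nlinarith

lemma regularize_mem {I : Set ℝ} (hI : I.OrdConnected) (hψI : range ψ ⊆ I)
    (hψ : LocallyIntegrable ψ) (hz : z ∈ I) (hε : 0 < ε) (hε1 : ε ≤ 1) (x : ℝ) :
    regularize ψ z ε x ∈ I := by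
  have hAψ : LocallyIntegrable (leftAvg ε ψ) := (continuous_leftAvg hψ).locallyIntegrable
  refine hI.one_sub_mul_add_mul_mem hψI hz hε hε1 (fun w hw => ?_) (fun w hw => ?_)
  · exact le_leftAvg hε hAψ fun _ _ => le_leftAvg hε hψ fun t _ => hw ⟨t, rfl⟩
  · exact leftAvg_le hε hAψ fun _ _ => leftAvg_le hε hψ fun t _ => hw ⟨t, rfl⟩

lemma abs_regularize_sub_le (hε : 0 < ε) (hε1 : ε ≤ 1) (x : ℝ) :
    |regularize ψ z ε x - ψ x| ≤ |leftAvg ε (leftAvg ε ψ) x - ψ x| + ε * |z - ψ x| :=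
  calc |regularize ψ z ε x - ψ x|
      = |(1 - ε) * (leftAvg ε (leftAvg ε ψ) x - ψ x) + ε * (z - ψ x)| := by
        rw [regularize]; ring_nf
    _ ≤ (1 - ε) * |leftAvg ε (leftAvg ε ψ) x - ψ x| + ε * |z - ψ x| := by
        refine (abs_add_le _ _).trans_eq ?_
        rw [abs_mul, abs_mul, abs_of_nonneg (by linarith : 0 ≤ 1 - ε), abs_of_pos hε]
    _ ≤ |leftAvg ε (leftAvg ε ψ) x - ψ x| + ε * |z - ψ x| := by
        nlinarith [abs_nonneg (leftAvg ε (leftAvg ε ψ) x - ψ x)]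

lemma tendsto_integral_abs_regularize_sub (hψ : Monotone fun t => M * t - ψ t) {a b : ℝ}
    (hab : a ≤ b) :
    Tendsto (fun ε => ∫ x in a..b, |regularize ψ z ε x - ψ x|) (𝓝[>] 0) (𝓝 0) := by
  have hψloc := locallyIntegrable_of_monotone_mul_sub hψ
  set K := ∫ x in a..b, |z - ψ x|
  have hbound : ∀ ε ∈ Ioc (0 : ℝ) 1, ∫ x in a..b, |regularize ψ z ε x - ψ x|
      ≤ (∫ x in a..b, |leftAvg ε (leftAvg ε ψ) x - ψ x|) + ε * K := by
    rintro ε ⟨hε, hε1⟩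
    have hAA : Continuous (leftAvg ε (leftAvg ε ψ)) :=
      continuous_leftAvg (continuous_leftAvg hψloc).locallyIntegrable
    have hint₁ : IntervalIntegrable (fun x => |leftAvg ε (leftAvg ε ψ) x - ψ x|) volume a b :=
      ((hAA.intervalIntegrable _ _).sub (hψloc.intervalIntegrable _ _)).abs
    have hint₂ : IntervalIntegrable (fun x => |z - ψ x|) volume a b :=
      (intervalIntegrable_const.sub (hψloc.intervalIntegrable _ _)).abs
    rw [← intervalIntegral.integral_const_mul, ← integral_add hint₁ (hint₂.const_mul ε)]
    refine integral_mono_on hab ?_ (hint₁.add (hint₂.const_mul ε))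
      fun x _ => abs_regularize_sub_le hε hε1 x
    exact ((((hAA.const_mul _).add continuous_const).intervalIntegrable _ _).sub
      (hψloc.intervalIntegrable _ _)).abs
  have hlim : Tendsto (fun ε => (∫ x in a..b, |leftAvg ε (leftAvg ε ψ) x - ψ x|) + ε * K)
      (𝓝[>] 0) (𝓝 0) := by
    simpa using (tendsto_integral_abs_leftAvg_leftAvg_sub hψ hab).add
      ((tendsto_nhdsWithin_of_tendsto_nhds (continuous_mul_const K).continuousAt.tendsto :
        Tendsto (fun ε => ε * K) (𝓝[>] 0) (𝓝 (0 * K))))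
  refine squeeze_zero' (Eventually.of_forall fun ε =>
    intervalIntegral.integral_nonneg hab fun x _ => abs_nonneg _) ?_ hlim
  filter_upwards [Ioc_mem_nhdsGT zero_lt_one] with ε hε using hbound ε hε

end regularize

theorem statement14_general
    (I : Set ℝ) (hIord : I.OrdConnected)
    (a b : ℝ) (hab : a < b) (M : ℝ) (hM : 0 < M)
    (φ : ℝ → ℝ)
    (him : φ '' Set.Icc a b ⊂ I)
    (hdini : ∀ x ∈ Set.Icc a b, upperDini φ (Set.Icc a b) x < ((M : ℝ) : EReal)) :
    ∃ φn : ℕ → ℝ → ℝ,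
      (∀ n, ContDiffOn ℝ 1 (φn n) (Set.Icc a b)) ∧
      (∃ N : ℕ, ∀ n ≥ N, (φn n) '' Set.Icc a b ⊆ I) ∧
      (∀ n, ∀ x ∈ Set.Icc a b, derivWithin (φn n) (Set.Icc a b) x < M) ∧
      Filter.Tendsto (fun n => ∫ x in Set.Icc a b, |φn n x - φ x|) Filter.atTop (nhds 0) := by
  obtain ⟨z, hzI, -⟩ := exists_of_ssubset him
  set ψ : ℝ → ℝ := fun t => φ (projIcc a b hab.le t)
  have hψ : Monotone fun t => M * t - ψ t :=
    (monotoneOn_mul_sub_of_upperDini_lt hdini).monotone_mul_sub_comp_projIcc hab.le hM.le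
  have hψloc := locallyIntegrable_of_monotone_mul_sub hψ
  have hψI : range ψ ⊆ I := by
    rintro _ ⟨t, rfl⟩
    exact him.subset (mem_image_of_mem φ (projIcc a b hab.le t).2)
  set ε : ℕ → ℝ := fun n => 1 / (n + 1)
  have hε : ∀ n, 0 < ε n ∧ ε n ≤ 1 := fun n =>
    ⟨by positivity, (div_le_one (by positivity)).2 (by linarith [n.cast_nonneg (α := ℝ)])⟩
  have hεlim : Tendsto ε atTop (𝓝[>] 0) := tendsto_nhdsWithin_iff.2
    ⟨tendsto_one_div_add_atTop_nhds_zero_nat, Eventually.of_forall fun n => (hε n).1⟩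
  have hIcc : ∀ n, ∫ x in Icc a b, |regularize ψ z (ε n) x - φ x|
      = ∫ x in a..b, |regularize ψ z (ε n) x - ψ x| := fun n => by
    rw [integral_Icc_eq_integral_Ioc, ← intervalIntegral.integral_of_le hab.le]
    refine integral_congr fun x hx => ?_
    rw [uIcc_of_le hab.le] at hx
    simp only [ψ, projIcc_of_mem hab.le hx]
  refine ⟨fun n => regularize ψ z (ε n), fun n => (contDiff_regularize hψloc).contDiffOn,
    ⟨0, fun n _ => ?_⟩, fun n x hx => ?_, ?_⟩
  · rintro _ ⟨x, -, rfl⟩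
    exact regularize_mem hIord hψI hψloc hzI (hε n).1 (hε n).2 x
  · rw [((contDiff_regularize hψloc).differentiable one_ne_zero x).derivWithin
      (uniqueDiffOn_Icc hab x hx)]
    exact deriv_regularize_lt hψ hM (hε n).1 (hε n).2 x
  · simp only [hIcc]
    exact (tendsto_integral_abs_regularize_sub hψ hab.le).comp hεlim

/-- a BV function on `[a,b]` with image a strict subset of the open interval
`I` and upper Dini derivative `< M` can be approximated in `L¹` by `C¹` functions with
derivative `< M` and (eventually) image contained in `I`. -/
theorem statement14
    (I : Set ℝ) (hIopen : IsOpen I) (hIord : I.OrdConnected)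
    (a b : ℝ) (hab : a < b) (M : ℝ) (hM : 0 < M)
    (φ : ℝ → ℝ) (hbv : BoundedVariationOn φ (Set.Icc a b))
    (him : φ '' Set.Icc a b ⊂ I)
    (hdini : ∀ x ∈ Set.Icc a b, upperDini φ (Set.Icc a b) x < ((M : ℝ) : EReal)) :
    ∃ φn : ℕ → ℝ → ℝ,
      (∀ n, ContDiffOn ℝ 1 (φn n) (Set.Icc a b)) ∧
      (∃ N : ℕ, ∀ n ≥ N, (φn n) '' Set.Icc a b ⊆ I) ∧
      (∀ n, ∀ x ∈ Set.Icc a b, derivWithin (φn n) (Set.Icc a b) x < M) ∧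
      Filter.Tendsto (fun n => ∫ x in Set.Icc a b, |φn n x - φ x|) Filter.atTop (nhds 0) :=
  statement14_general I hIord a b hab M hM φ him hdini
end
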